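/- arXiv:2010.12125 — 11 statements merged into one kernel-verified Lean document; each statement's English description precedes it below -/
import Mathlib

section
/- For every finite family H_1, …, H_m of affine hyperplanes in ℝ^d, the number of connected components of the complement ℝ^d ∖ (H_1 ∪ ⋯ ∪ H_m) is at most ∑_{i=0}^{d} C(m, i), where C(m, i) denotes the binomial coefficient. -/
/-- An affine hyperplane in ℝ^d: a set of the form {x : ⟨w,x⟩ = c} with w ≠ 0. -/
def IsHyperplane {d : ℕ} (H : Set (Fin d → ℝ)) : Prop :=
  ∃ w : Fin d → ℝ, w ≠ 0 ∧ ∃ c : ℝ, H = {x | ∑ i, w i * x i = c}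

/-- The set of connected components of a subset `S` of a topological space. -/
def components {X : Type*} [TopologicalSpace X] (S : Set X) : Set (Set X) :=
  {C | ∃ x ∈ S, C = connectedComponentIn S x}

/-!
Write each hyperplane as the zero set of an affine function `fᵢ`. On the complement, the set of
points at which exactly a given set of the `fᵢ` is positive is an intersection of open half-spaces,
hence convex, hence inside one chamber; so there are at most as many chambers as realized sign
patterns. If the realized patterns shatter a set `s` of indices, the linear parts of the `fᵢ`,
`i ∈ s`, are linearly independent: a relation `∑ aᵢ • fᵢ = const` is impossible, since the left
side is `≥ 0` at a point whose positive set on `s` is `{aᵢ > 0}`, `≤ 0` at one whose positive set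
is `{aᵢ < 0}`, and strictly so at one of them. Hence the patterns have VC dimension at most `d`,
and the Sauer–Shelah lemma bounds their number by `∑_{i ≤ d} C(m, i)`.
-/

open Finset Module

variable {ι E : Type*}

lemma mul_nonneg_of_pos_iff_pos {R : Type*} [Ring R] [LinearOrder R] [IsStrictOrderedRing R]
    {a b : R} (h : 0 < b ↔ 0 < a) : 0 ≤ a * b := by
  rcases lt_or_ge 0 a with ha | ha
  · exact (mul_pos ha (h.2 ha)).le
  · exact mul_nonneg_of_nonpos_of_nonpos ha (not_lt.1 (mt h.1 ha.not_gt))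

lemma Finset.sum_mul_pos_of_pos_iff_pos {R : Type*} [Ring R] [LinearOrder R]
    [IsStrictOrderedRing R] {s : Finset ι} {a b : ι → R} (h : ∀ i ∈ s, 0 < b i ↔ 0 < a i)
    (ha : ∃ i ∈ s, 0 < a i) : 0 < ∑ i ∈ s, a i * b i :=
  sum_pos' (fun i hi ↦ mul_nonneg_of_pos_iff_pos (h i hi))
    (ha.imp fun i ⟨hi, hai⟩ ↦ ⟨hi, mul_pos hai ((h i hi).2 hai)⟩)

lemma Set.finite_image_and_ncard_image_le_of_factorsThrough {α β γ : Type*} [Nonempty α] {s : Set α}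
    {g : α → β} {h : α → γ} (hh : (h '' s).Finite)
    (hgh : ∀ x ∈ s, ∀ y ∈ s, h x = h y → g x = g y) :
    (g '' s).Finite ∧ (g '' s).ncard ≤ (h '' s).ncard := by
  have himage : g '' s = (g ∘ Function.invFunOn h s) '' (h '' s) := by
    ext b
    constructor
    · rintro ⟨x, hx, rfl⟩
      exact ⟨h x, Set.mem_image_of_mem h hx, hgh _ (Function.invFunOn_mem ⟨x, hx, rfl⟩) x hx
        (Function.invFunOn_eq ⟨x, hx, rfl⟩)⟩
    · rintro ⟨_, ⟨x, hx, rfl⟩, rfl⟩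
      exact Set.mem_image_of_mem g (Function.invFunOn_mem ⟨x, hx, rfl⟩)
  rw [himage]
  exact ⟨hh.image _, Set.ncard_image_le hh⟩

section SignPattern

variable [Fintype ι] [AddCommGroup E] [Module ℝ E]

noncomputable def signPattern (f : ι → E →ᵃ[ℝ] ℝ) (x : E) : Finset ι := {i | 0 < f i x}

noncomputable def signPatterns (f : ι → E →ᵃ[ℝ] ℝ) : Finset (Finset ι) :=
  (Set.range (signPattern f)).toFinite.toFinset

variable {f : ι → E →ᵃ[ℝ] ℝ}

@[simp]
lemma mem_signPattern {x : E} {i : ι} : i ∈ signPattern f x ↔ 0 < f i x := by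
  simp [signPattern]

@[simp]
lemma mem_signPatterns {s : Finset ι} : s ∈ signPatterns f ↔ ∃ x, signPattern f x = s := by
  simp [signPatterns]

lemma linearIndepOn_linear_of_shatters [DecidableEq ι] {s : Finset ι}
    (hs : (signPatterns f).Shatters s) : LinearIndepOn ℝ (fun i ↦ (f i).linear) (s : Set ι) := by
  have realize (t : ι → ℝ) : ∃ x, ∀ i ∈ s, 0 < f i x ↔ 0 < t i := by
    obtain ⟨u, hu, hsu⟩ := hs (s.filter_subset (fun i ↦ 0 < t i))
    obtain ⟨x, rfl⟩ := mem_signPatterns.1 hu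
    exact ⟨x, fun i hi ↦ by simpa [hi] using Finset.ext_iff.1 hsu i⟩
  rw [linearIndepOn_finset_iff]
  intro a ha
  obtain ⟨x, hx⟩ := realize a
  obtain ⟨y, hy⟩ := realize (-a)
  have hxy : ∑ i ∈ s, a i * f i x = ∑ i ∈ s, a i * f i y := by
    have := LinearMap.congr_fun ha (x -ᵥ y)
    simp only [LinearMap.sum_apply, LinearMap.smul_apply, AffineMap.linearMap_vsub,
      LinearMap.zero_apply] at this
    simpa only [vsub_eq_sub, smul_eq_mul, mul_sub, sum_sub_distrib, sub_eq_zero] using this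
  by_contra! hne
  obtain ⟨i, hi, hai⟩ := hne
  have hx0 : 0 ≤ ∑ i ∈ s, a i * f i x := sum_nonneg fun i hi ↦ mul_nonneg_of_pos_iff_pos (hx i hi)
  have hy0 : 0 ≤ ∑ i ∈ s, (-a) i * f i y :=
    sum_nonneg fun i hi ↦ mul_nonneg_of_pos_iff_pos (hy i hi)
  simp only [Pi.neg_apply, neg_mul, sum_neg_distrib, neg_nonneg] at hy0
  rcases hai.lt_or_gt with hneg | hpos
  · have := sum_mul_pos_of_pos_iff_pos hy ⟨i, hi, neg_pos.2 hneg⟩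
    simp only [Pi.neg_apply, neg_mul, sum_neg_distrib, neg_pos] at this
    linarith
  · linarith [sum_mul_pos_of_pos_iff_pos hx ⟨i, hi, hpos⟩]

lemma vcDim_signPatterns_le [DecidableEq ι] [FiniteDimensional ℝ E] (f : ι → E →ᵃ[ℝ] ℝ) :
    (signPatterns f).vcDim ≤ finrank ℝ E :=
  Finset.sup_le fun s hs ↦ by
    simpa using (linearIndepOn_linear_of_shatters (mem_shatterer.1 hs)).fintype_card_le_finrank

lemma card_signPatterns_le [FiniteDimensional ℝ E] (f : ι → E →ᵃ[ℝ] ℝ) :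
    #(signPatterns f) ≤ ∑ k ∈ range (finrank ℝ E + 1), (Fintype.card ι).choose k := by
  classical
  calc #(signPatterns f) ≤ #(signPatterns f).shatterer := card_le_card_shatterer _
    _ ≤ ∑ k ∈ Iic (signPatterns f).vcDim, (Fintype.card ι).choose k :=
      card_shatterer_le_sum_vcDim
    _ ≤ _ := by
      refine sum_le_sum_of_subset fun k hk ↦ ?_
      have := vcDim_signPatterns_le f
      simp only [mem_Iic, mem_range] at hk ⊢
      omega

end SignPattern

section Chambers

variable [Fintype ι] [TopologicalSpace E] [AddCommGroup E] [Module ℝ E] [IsTopologicalAddGroup E]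
  [ContinuousSMul ℝ E] {f : ι → E →ᵃ[ℝ] ℝ}

lemma connectedComponentIn_eq_of_signPattern_eq {x y : E} (hx : ∀ i, f i x ≠ 0)
    (hy : ∀ i, f i y ≠ 0) (hxy : signPattern f x = signPattern f y) :
    connectedComponentIn {z | ∀ i, f i z ≠ 0} x = connectedComponentIn {z | ∀ i, f i z ≠ 0} y := by
  set C := ⋂ i, f i ⁻¹' (if 0 < f i x then Set.Ioi 0 else Set.Iio 0)
  have hconv : Convex ℝ C := convex_iInter fun i ↦ by
    split_ifs
    exacts [(convex_Ioi 0).affine_preimage (f i), (convex_Iio 0).affine_preimage (f i)]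
  have hCS : C ⊆ {z | ∀ i, f i z ≠ 0} := by
    intro z hz i
    have := Set.mem_iInter.1 hz i
    split_ifs at this
    exacts [ne_of_gt this, ne_of_lt this]
  have mem_C {z : E} (hz : ∀ i, f i z ≠ 0) (hzx : ∀ i, 0 < f i z ↔ 0 < f i x) : z ∈ C := by
    refine Set.mem_iInter.2 fun i ↦ ?_
    split_ifs with h
    exacts [(hzx i).2 h, (hz i).lt_of_le (not_lt.1 (mt (hzx i).1 h))]
  have hyx : ∀ i, 0 < f i y ↔ 0 < f i x := by
    simpa [Finset.ext_iff] using hxy.symm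
  exact connectedComponentIn_eq <| hconv.isPreconnected.subset_connectedComponentIn
    (mem_C hx fun _ ↦ Iff.rfl) hCS (mem_C hy hyx)

theorem components_finite_and_ncard_le_card_signPatterns (f : ι → E →ᵃ[ℝ] ℝ) :
    (components {x | ∀ i, f i x ≠ 0}).Finite ∧
      (components {x | ∀ i, f i x ≠ 0}).ncard ≤ #(signPatterns f) := by
  set S := {x | ∀ i, f i x ≠ 0}
  have hcomp : components S = connectedComponentIn S '' S := by
    ext; simp [components, eq_comm]
  obtain ⟨hfin, hle⟩ := Set.finite_image_and_ncard_image_le_of_factorsThrough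
    (g := connectedComponentIn S) (Set.toFinite (signPattern f '' S))
    fun x hx y hy ↦ connectedComponentIn_eq_of_signPattern_eq hx hy
  rw [hcomp]
  refine ⟨hfin, hle.trans ?_⟩
  calc (signPattern f '' S).ncard ≤ (Set.range (signPattern f)).ncard :=
        Set.ncard_le_ncard (Set.image_subset_range _ _) (Set.toFinite _)
    _ = #(signPatterns f) := Set.ncard_eq_toFinset_card _ _

theorem components_finite_and_ncard_le [FiniteDimensional ℝ E] (f : ι → E →ᵃ[ℝ] ℝ) :
    (components {x | ∀ i, f i x ≠ 0}).Finite ∧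
      (components {x | ∀ i, f i x ≠ 0}).ncard ≤
        ∑ k ∈ range (finrank ℝ E + 1), (Fintype.card ι).choose k :=
  (components_finite_and_ncard_le_card_signPatterns f).imp_right (·.trans (card_signPatterns_le f))

end Chambers

lemma IsHyperplane.exists_affineMap {d : ℕ} {H : Set (Fin d → ℝ)} (hH : IsHyperplane H) :
    ∃ f : (Fin d → ℝ) →ᵃ[ℝ] ℝ, H = {x | f x = 0} := by
  obtain ⟨w, -, c, rfl⟩ := hH
  refine ⟨(dotProductEquiv ℝ (Fin d) w).toAffineMap - AffineMap.const ℝ _ c, ?_⟩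
  ext x
  simp [dotProduct, sub_eq_zero]

/-- The number of chambers of an arrangement of `m` hyperplanes in ℝ^d is at most
`∑_{i=0}^d C(m,i)`. -/
theorem num_chambers_le (d m : ℕ) (H : Fin m → Set (Fin d → ℝ))
    (hH : ∀ i, IsHyperplane (H i)) :
    (components ((⋃ i, H i)ᶜ)).Finite ∧
      (components ((⋃ i, H i)ᶜ)).ncard ≤ ∑ i ∈ Finset.range (d + 1), m.choose i := by
  choose f hf using fun i ↦ (hH i).exists_affineMap
  have hS : (⋃ i, H i)ᶜ = {x | ∀ i, f i x ≠ 0} := by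
    ext
    simp [hf]
  simpa [hS] using components_finite_and_ncard_le f
end

section
/- Let H_1, …, H_m be a finite family of pairwise distinct affine hyperplanes in ℝ^d which is in general position. Then the number of connected components of ℝ^d ∖ (H_1 ∪ ⋯ ∪ H_m) is exactly ∑_{i=0}^{d} C(m, i). -/
/-- A family of hyperplanes in ℝ^d is in general position if every subfamily of size
`r ≤ d` intersects in a (nonempty) affine subspace of dimension `d - r`, and every
subfamily of size `r > d` has empty intersection. -/
def InGeneralPosition {d m : ℕ} (H : Fin m → Set (Fin d → ℝ)) : Prop :=
  ∀ S : Finset (Fin m),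
    (S.card ≤ d →
      ∃ A : AffineSubspace ℝ (Fin d → ℝ), (A : Set (Fin d → ℝ)) = ⋂ i ∈ S, H i ∧
        (A : Set (Fin d → ℝ)).Nonempty ∧ Module.finrank ℝ A.direction = d - S.card) ∧
    (d < S.card → ⋂ i ∈ S, H i = ∅)

/-!
The chambers are the nonempty sets `⋂ i, {x | f i x ≷ c i}` cut out by a sign vector: they are
open and convex and partition the complement, so they are its connected components, and the
theorem counts the sign vectors realised by points.

Counting is by deletion–restriction inside an `n`-dimensional affine subspace `A`. A realised
sign vector of the arrangement without `H = {f₀ = c₀}` extends to one or to two realised sign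
vectors, to two exactly when its chamber meets `A ∩ H`: convexity gives the crossing point, and
since `A ⊄ H` a point of `A ∩ H` can be pushed to either side along a line in `A`. General
position passes to `A ∩ H` with `n - 1` in place of `n`, so the count `r(m, n)` satisfies
`r(m + 1, n) = r(m, n) + r(m, n - 1)`, which is Pascal's rule for `∑ i ≤ n, C(m, i)`.
-/

open Set Topology

lemma LinearMap.map_lineMap {E : Type*} [AddCommGroup E] [Module ℝ E] (g : E →ₗ[ℝ] ℝ)
    (x q : E) (t : ℝ) : g (AffineMap.lineMap x q t) = AffineMap.lineMap (g x) (g q) t :=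
  g.toAffineMap.apply_lineMap x q t

lemma Nat.sum_range_choose_pascal (m n : ℕ) :
    ∑ i ∈ Finset.range (n + 1), (m + 1).choose i =
      ∑ i ∈ Finset.range (n + 1), m.choose i + ∑ i ∈ Finset.range n, m.choose i := by
  simp only [Finset.sum_range_succ', Nat.choose_succ_succ', Finset.sum_add_distrib,
    Nat.choose_zero_right]
  ring

namespace HyperplaneArrangement

variable {E ι κ : Type*} [AddCommGroup E] [Module ℝ E]

def side (a : ℝ) : Bool → Set ℝ
  | true => Ioi a
  | false => Iio a

lemma isOpen_side (a : ℝ) (b : Bool) : IsOpen (side a b) := by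
  cases b
  exacts [isOpen_Iio, isOpen_Ioi]

lemma convex_side (a : ℝ) (b : Bool) : Convex ℝ (side a b) := by
  cases b
  exacts [convex_Iio a, convex_Ioi a]

lemma ne_iff_exists_mem_side {a t : ℝ} : t ≠ a ↔ ∃ b, t ∈ side a b := by
  refine ⟨fun h => ?_, fun ⟨b, hb⟩ => ?_⟩
  · rcases h.lt_or_gt with h | h
    exacts [⟨false, h⟩, ⟨true, h⟩]
  · cases b
    exacts [ne_of_lt hb, ne_of_gt hb]

lemma eq_of_mem_side_of_mem_side {a t : ℝ} {b b' : Bool} (h : t ∈ side a b)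
    (h' : t ∈ side a b') : b = b' := by
  cases b <;> cases b' <;> simp only [side, mem_Ioi, mem_Iio] at h h' ⊢ <;> linarith

lemma lineMap_mem_side {a u t : ℝ} {b : Bool} (hu : u ∈ side a b) (ht : 0 < t) :
    AffineMap.lineMap a u t ∈ side a b := by
  rw [AffineMap.lineMap_apply_ring']
  cases b
  · have : t * (u - a) < 0 := mul_neg_of_pos_of_neg ht (sub_neg.2 hu)
    simp only [side, mem_Iio]
    linarith
  · have : 0 < t * (u - a) := mul_pos ht (sub_pos.2 hu)
    simp only [side, mem_Ioi]
    linarith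

lemma exists_lineMap_mem_side {g : E →ₗ[ℝ] ℝ} {x p : E} (h : g p ≠ g x) (b : Bool) :
    ∃ t : ℝ, g (AffineMap.lineMap x p t) ∈ side (g x) b := by
  have hd : 0 < (g p - g x) * (g p - g x) := mul_self_pos.2 (sub_ne_zero.2 h)
  simp only [LinearMap.map_lineMap, AffineMap.lineMap_apply_ring']
  cases b
  · exact ⟨-(g p - g x), by simp only [side, mem_Iio]; linarith⟩
  · exact ⟨g p - g x, by simp only [side, mem_Ioi]; linarith⟩

def chamber (f : ι → E →ₗ[ℝ] ℝ) (c : ι → ℝ) (ε : ι → Bool) : Set E :=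
  ⋂ i, f i ⁻¹' side (c i) (ε i)

def signVectors (s : Set E) (f : ι → E →ₗ[ℝ] ℝ) (c : ι → ℝ) : Set (ι → Bool) :=
  {ε | (s ∩ chamber f c ε).Nonempty}

section Chambers

variable {f : ι → E →ₗ[ℝ] ℝ} {c : ι → ℝ}

lemma convex_chamber (ε : ι → Bool) : Convex ℝ (chamber f c ε) :=
  convex_iInter fun i => (convex_side _ _).linear_preimage (f i)

lemma disjoint_chamber {ε ε' : ι → Bool} (h : ε ≠ ε') :
    Disjoint (chamber f c ε) (chamber f c ε') := by
  refine disjoint_left.2 fun x hx hx' => h (funext fun i => ?_)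
  exact eq_of_mem_side_of_mem_side (mem_iInter.1 hx i) (mem_iInter.1 hx' i)

lemma compl_iUnion_eq_iUnion_chamber :
    (⋃ i, {x | f i x = c i})ᶜ = ⋃ ε, chamber f c ε := by
  ext x
  simp only [compl_iUnion, mem_iInter, mem_compl_iff, mem_ofPred_eq, ← ne_eq,
    ne_iff_exists_mem_side, chamber, mem_iUnion, mem_preimage, Classical.skolem]

lemma signVectors_mono {s t : Set E} (h : s ⊆ t) : signVectors s f c ⊆ signVectors t f c :=
  fun _ ⟨x, hxs, hx⟩ => ⟨x, h hxs, hx⟩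

section Components

variable [TopologicalSpace E] [Finite ι]

lemma isOpen_chamber (hf : ∀ i, Continuous (f i)) (ε : ι → Bool) : IsOpen (chamber f c ε) :=
  isOpen_iInter_of_finite fun i => (isOpen_side _ _).preimage (hf i)

variable [ContinuousAdd E] [ContinuousSMul ℝ E]

lemma connectedComponentIn_eq_chamber (hf : ∀ i, Continuous (f i)) {ε : ι → Bool} {x : E}
    (hx : x ∈ chamber f c ε) :
    connectedComponentIn (⋃ i, {x | f i x = c i})ᶜ x = chamber f c ε := by
  rw [compl_iUnion_eq_iUnion_chamber]
  refine Subset.antisymm ?_ ((convex_chamber ε).isPreconnected.subset_connectedComponentIn hx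
    (subset_iUnion _ ε))
  have hcover : ⋃ ε', chamber f c ε' ⊆ chamber f c ε ∪ ⋃ ε' ∈ ({ε}ᶜ : Set _), chamber f c ε' := by
    intro y hy
    obtain ⟨ε', hy⟩ := mem_iUnion.1 hy
    by_cases h : ε' = ε
    · exact Or.inl (h ▸ hy)
    · exact Or.inr (mem_biUnion h hy)
  exact isPreconnected_connectedComponentIn.subset_left_of_subset_union (isOpen_chamber hf ε)
    (isOpen_biUnion fun ε' _ => isOpen_chamber hf ε')
    (disjoint_iUnion₂_right.2 fun ε' h => disjoint_chamber (Ne.symm h))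
    ((connectedComponentIn_subset _ _).trans hcover)
    ⟨x, mem_connectedComponentIn (mem_iUnion_of_mem ε hx), hx⟩

lemma components_eq_image_chamber (hf : ∀ i, Continuous (f i)) :
    components (⋃ i, {x | f i x = c i})ᶜ = chamber f c '' signVectors univ f c := by
  ext C
  simp only [components, signVectors, univ_inter, mem_image, mem_ofPred_eq]
  constructor
  · rintro ⟨x, hx, rfl⟩
    rw [compl_iUnion_eq_iUnion_chamber] at hx
    obtain ⟨ε, hε⟩ := mem_iUnion.1 hx
    exact ⟨ε, ⟨x, hε⟩, (connectedComponentIn_eq_chamber hf hε).symm⟩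
  · rintro ⟨ε, ⟨x, hx⟩, rfl⟩
    refine ⟨x, ?_, (connectedComponentIn_eq_chamber hf hx).symm⟩
    rw [compl_iUnion_eq_iUnion_chamber]
    exact mem_iUnion_of_mem ε hx

lemma ncard_components_compl_iUnion (hf : ∀ i, Continuous (f i)) :
    (components (⋃ i, {x | f i x = c i})ᶜ).ncard = (signVectors univ f c).ncard := by
  rw [components_eq_image_chamber hf]
  refine InjOn.ncard_image fun ε hε ε' _ h => ?_
  by_contra hne
  obtain ⟨x, -, hx⟩ := hε
  exact (disjoint_chamber hne).ne_of_mem hx (h ▸ hx) rfl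

end Components

section DeletionRestriction

variable [Finite ι] {A : AffineSubspace ℝ E} {g : E →ₗ[ℝ] ℝ} {a : ℝ}

lemma eventually_lineMap_mem_chamber {ε : ι → Bool} {x : E} (hx : x ∈ chamber f c ε) (q : E) :
    ∀ᶠ t in 𝓝 (0 : ℝ), AffineMap.lineMap x q t ∈ chamber f c ε := by
  simp only [chamber, mem_iInter, mem_preimage, Filter.eventually_all, LinearMap.map_lineMap]
  intro i
  refine AffineMap.lineMap_continuous.continuousAt.eventually_mem ((isOpen_side _ _).mem_nhds ?_)
  simpa using mem_iInter.1 hx i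

lemma mem_signVectors_inter_side {ε : ι → Bool} {x q : E}
    (hx : x ∈ (A : Set E) ∩ chamber f c ε) (hq : q ∈ A) {b : Bool} (hgq : g q ∈ side (g x) b) :
    ε ∈ signVectors (A ∩ g ⁻¹' side (g x) b) f c := by
  obtain ⟨t, ht, ht0⟩ := ((eventually_lineMap_mem_chamber hx.2 q).filter_mono
    nhdsWithin_le_nhds |>.and (self_mem_nhdsWithin (s := Ioi 0))).exists
  refine ⟨AffineMap.lineMap x q t, ⟨AffineMap.lineMap_mem t hx.1 hq, ?_⟩, ht⟩
  rw [mem_preimage, LinearMap.map_lineMap]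
  exact lineMap_mem_side hgq ht0

lemma mem_signVectors_side_of_mem_hyperplane (hA : ¬ (A : Set E) ⊆ {y | g y = a})
    {ε : ι → Bool} {x : E} (hx : x ∈ (A : Set E) ∩ chamber f c ε) (hgx : g x = a) (b : Bool) :
    ε ∈ signVectors (A ∩ g ⁻¹' side a b) f c := by
  obtain ⟨p, hpA, hp⟩ := not_subset.1 hA
  subst hgx
  obtain ⟨t, ht⟩ := exists_lineMap_mem_side hp b
  exact mem_signVectors_inter_side hx (AffineMap.lineMap_mem t hx.1 hpA) ht

lemma signVectors_side_union (hA : ¬ (A : Set E) ⊆ {y | g y = a}) :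
    signVectors (A ∩ g ⁻¹' side a false) f c ∪ signVectors (A ∩ g ⁻¹' side a true) f c =
      signVectors A f c := by
  refine Subset.antisymm (union_subset (signVectors_mono inter_subset_left)
    (signVectors_mono inter_subset_left)) fun ε ⟨x, hx⟩ => ?_
  refine (Bool.exists_bool (p := fun b => ε ∈ signVectors (A ∩ g ⁻¹' side a b) f c)).1 ?_
  by_cases hgx : g x = a
  · exact ⟨true, mem_signVectors_side_of_mem_hyperplane hA hx hgx true⟩
  · obtain ⟨b, hb⟩ := ne_iff_exists_mem_side.1 hgx
    exact ⟨b, x, ⟨hx.1, hb⟩, hx.2⟩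

lemma signVectors_side_inter (hA : ¬ (A : Set E) ⊆ {y | g y = a}) :
    signVectors (A ∩ g ⁻¹' side a false) f c ∩ signVectors (A ∩ g ⁻¹' side a true) f c =
      signVectors (A ∩ {x | g x = a}) f c := by
  ext ε
  constructor
  · rintro ⟨⟨x, ⟨hxA, hxg⟩, hx⟩, ⟨y, ⟨hyA, hyg⟩, hy⟩⟩
    obtain ⟨z, hz, hgz⟩ := ((A.convex.inter (convex_chamber ε)).linear_image g).ordConnected.out
      ⟨x, ⟨hxA, hx⟩, rfl⟩ ⟨y, ⟨hyA, hy⟩, rfl⟩ ⟨le_of_lt hxg, le_of_lt hyg⟩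
    exact ⟨z, ⟨hz.1, hgz⟩, hz.2⟩
  · rintro ⟨x, ⟨hxA, hgx⟩, hx⟩
    exact ⟨mem_signVectors_side_of_mem_hyperplane hA ⟨hxA, hx⟩ hgx false,
      mem_signVectors_side_of_mem_hyperplane hA ⟨hxA, hx⟩ hgx true⟩

lemma ncard_signVectors_side_add (hA : ¬ (A : Set E) ⊆ {y | g y = a}) :
    (signVectors (A ∩ g ⁻¹' side a false) f c).ncard +
        (signVectors (A ∩ g ⁻¹' side a true) f c).ncard =
      (signVectors A f c).ncard + (signVectors (A ∩ {x | g x = a}) f c).ncard := by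
  rw [← signVectors_side_union hA, ← signVectors_side_inter hA, ncard_union_add_ncard_inter]

end DeletionRestriction

end Chambers

lemma chamber_vecCons {m : ℕ} (f : Fin (m + 1) → E →ₗ[ℝ] ℝ) (c : Fin (m + 1) → ℝ) (b : Bool)
    (ε : Fin m → Bool) :
    chamber f c (Matrix.vecCons b ε) =
      f 0 ⁻¹' side (c 0) b ∩ chamber (Fin.tail f) (Fin.tail c) ε := by
  ext x
  simp [chamber, Fin.forall_fin_succ, Fin.tail]

lemma ncard_signVectors_fin_succ {m : ℕ} (s : Set E) (f : Fin (m + 1) → E →ₗ[ℝ] ℝ)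
    (c : Fin (m + 1) → ℝ) :
    (signVectors s f c).ncard =
      (signVectors (s ∩ f 0 ⁻¹' side (c 0) false) (Fin.tail f) (Fin.tail c)).ncard +
        (signVectors (s ∩ f 0 ⁻¹' side (c 0) true) (Fin.tail f) (Fin.tail c)).ncard := by
  have hpre (b : Bool) : Matrix.vecCons b ⁻¹' signVectors s f c =
      signVectors (s ∩ f 0 ⁻¹' side (c 0) b) (Fin.tail f) (Fin.tail c) := by
    ext ε
    simp only [mem_preimage, signVectors, chamber_vecCons, mem_ofPred_eq, inter_assoc]
  have hsplit : signVectors s f c =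
      Matrix.vecCons false '' (Matrix.vecCons false ⁻¹' signVectors s f c) ∪
        Matrix.vecCons true '' (Matrix.vecCons true ⁻¹' signVectors s f c) := by
    refine Subset.antisymm (fun ε hε => ?_) (union_subset (image_preimage_subset _ _)
      (image_preimage_subset _ _))
    obtain ⟨b, ε', rfl⟩ : ∃ b ε', ε = Matrix.vecCons b ε' := ⟨_, _, (Matrix.cons_head_tail ε).symm⟩
    cases b
    exacts [Or.inl (mem_image_of_mem _ hε), Or.inr (mem_image_of_mem _ hε)]
  have hdisj : Disjoint (range (Matrix.vecCons false : (Fin m → Bool) → Fin (m + 1) → Bool))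
      (range (Matrix.vecCons true)) := by
    refine disjoint_left.2 ?_
    rintro _ ⟨u, rfl⟩ ⟨v, h⟩
    exact Bool.noConfusion (Matrix.vecCons_inj.1 h).1
  have hinj (b : Bool) : Function.Injective (Matrix.vecCons b : (Fin m → Bool) → _) :=
    fun _ _ h => (Matrix.vecCons_inj.1 h).2
  rw [hsplit, ncard_union_eq (hdisj.mono (image_subset_range _ _) (image_subset_range _ _)),
    (hinj false).injOn.ncard_image, (hinj true).injOn.ncard_image, hpre, hpre]

def IsGeneralPositionIn (A : AffineSubspace ℝ E) (n : ℕ) (f : ι → E →ₗ[ℝ] ℝ) (c : ι → ℝ) :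
    Prop :=
  ∀ S : Finset ι,
    (S.card ≤ n → ∃ B : AffineSubspace ℝ E,
      (B : Set E) = (A : Set E) ∩ ⋂ i ∈ S, {x | f i x = c i} ∧
      (B : Set E).Nonempty ∧ Module.finrank ℝ B.direction = n - S.card) ∧
    (n < S.card → (A : Set E) ∩ ⋂ i ∈ S, {x | f i x = c i} = ∅)

lemma _root_.InGeneralPosition.isGeneralPositionIn_top {d m : ℕ}
    {f : Fin m → (Fin d → ℝ) →ₗ[ℝ] ℝ} {c : Fin m → ℝ}
    (h : InGeneralPosition fun i => {x | f i x = c i}) : IsGeneralPositionIn ⊤ d f c :=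
  fun S => by simpa using h S

namespace IsGeneralPositionIn

variable {A : AffineSubspace ℝ E} {n : ℕ} {f : ι → E →ₗ[ℝ] ℝ} {c : ι → ℝ}

lemma nonempty (h : IsGeneralPositionIn A n f c) : (A : Set E).Nonempty := by
  obtain ⟨B, hB, hne, -⟩ := (h ∅).1 (Nat.zero_le n)
  simpa [hB] using hne

lemma finrank_direction (h : IsGeneralPositionIn A n f c) :
    Module.finrank ℝ A.direction = n := by
  obtain ⟨B, hB, -, hrank⟩ := (h ∅).1 (Nat.zero_le n)
  obtain rfl : B = A := SetLike.coe_injective (by simpa using hB)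
  simpa using hrank

lemma inter_eq_empty (h : IsGeneralPositionIn A 0 f c) (j : ι) :
    (A : Set E) ∩ {x | f j x = c j} = ∅ := by
  simpa using (h {j}).2 (by simp)

lemma not_subset (h : IsGeneralPositionIn A n f c) (j : ι) :
    ¬ (A : Set E) ⊆ {x | f j x = c j} := by
  intro hsub
  cases n with
  | zero => exact h.nonempty.ne_empty (by simpa [inter_eq_left.2 hsub] using h.inter_eq_empty j)
  | succ k =>
    obtain ⟨B, hB, -, hrank⟩ := (h {j}).1 (by simp)
    obtain rfl : B = A := SetLike.coe_injective (by simpa [inter_eq_left.2 hsub] using hB)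
    simp [h.finrank_direction] at hrank

lemma comp_embedding (h : IsGeneralPositionIn A n f c) (e : κ ↪ ι) :
    IsGeneralPositionIn A n (f ∘ e) (c ∘ e) := by
  intro S
  simpa [Finset.set_biInter_finset_image] using h (S.map e)

lemma exists_isGeneralPositionIn_inter (h : IsGeneralPositionIn A (n + 1) f c) (e : κ ↪ ι)
    {j : ι} (hj : j ∉ range e) :
    ∃ B : AffineSubspace ℝ E, (B : Set E) = (A : Set E) ∩ {x | f j x = c j} ∧
      IsGeneralPositionIn B n (f ∘ e) (c ∘ e) := by
  classical
  obtain ⟨B, hB, -, -⟩ := (h {j}).1 (by simp)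
  refine ⟨B, by simpa using hB, fun S => ?_⟩
  have hcard : (insert j (S.map e)).card = S.card + 1 :=
    (Finset.card_insert_of_notMem (by simpa using fun x _ hx => hj ⟨x, hx⟩)).trans
      (by rw [Finset.card_map])
  have hinter : (A : Set E) ∩ ⋂ i ∈ insert j (S.map e), {x | f i x = c i} =
      (B : Set E) ∩ ⋂ i ∈ S, {x | (f ∘ e) i x = (c ∘ e) i} := by
    simp [hB, inter_assoc]
  rw [← hinter]
  have hS := h (insert j (S.map e))
  rw [hcard] at hS
  refine ⟨fun hle => ?_, fun hlt => hS.2 (by omega)⟩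
  obtain ⟨B', hB', hne, hrank⟩ := hS.1 (by omega)
  exact ⟨B', hB', hne, by omega⟩

end IsGeneralPositionIn

theorem ncard_signVectors {m n : ℕ} {A : AffineSubspace ℝ E} {f : Fin m → E →ₗ[ℝ] ℝ}
    {c : Fin m → ℝ} (h : IsGeneralPositionIn A n f c) :
    (signVectors A f c).ncard = ∑ i ∈ Finset.range (n + 1), m.choose i := by
  induction m generalizing n A with
  | zero =>
    have : signVectors A f c = univ := eq_univ_of_forall fun ε => by
      simpa [signVectors, chamber] using h.nonempty
    simp [this, Finset.sum_range_succ']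
  | succ m ih =>
    have hdelete : (signVectors A (Fin.tail f) (Fin.tail c)).ncard =
        ∑ i ∈ Finset.range (n + 1), m.choose i :=
      ih (h.comp_embedding (Fin.succEmb m))
    have hrestrict : (signVectors ((A : Set E) ∩ {x | f 0 x = c 0}) (Fin.tail f)
        (Fin.tail c)).ncard = ∑ i ∈ Finset.range n, m.choose i := by
      cases n with
      | zero => simp [h.inter_eq_empty 0, signVectors]
      | succ k =>
        obtain ⟨B, hB, hBgp⟩ := h.exists_isGeneralPositionIn_inter (Fin.succEmb m) (j := 0)
          (by simp)
        rw [← hB]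
        exact ih hBgp
    rw [ncard_signVectors_fin_succ, ncard_signVectors_side_add (h.not_subset 0), hdelete,
      hrestrict, Nat.sum_range_choose_pascal]

end HyperplaneArrangement

theorem num_chambers_general_position_general (d m : ℕ) (H : Fin m → Set (Fin d → ℝ))
    (hH : ∀ i, IsHyperplane (H i)) (hgen : InGeneralPosition H) :
    (components ((⋃ i, H i)ᶜ)).ncard = ∑ i ∈ Finset.range (d + 1), m.choose i := by
  choose w _ c hc using hH
  let f : Fin m → (Fin d → ℝ) →ₗ[ℝ] ℝ := fun i => dotProductEquiv ℝ (Fin d) (w i)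
  obtain rfl : H = fun i => {x | f i x = c i} := funext hc
  rw [HyperplaneArrangement.ncard_components_compl_iUnion
    fun i => (f i).continuous_of_finiteDimensional, ← AffineSubspace.top_coe ℝ]
  exact HyperplaneArrangement.ncard_signVectors hgen.isGeneralPositionIn_top

/-- An arrangement of `m` pairwise distinct hyperplanes in general position in ℝ^d has
exactly `∑_{i=0}^d C(m,i)` chambers. -/
theorem num_chambers_general_position (d m : ℕ) (H : Fin m → Set (Fin d → ℝ))
    (hH : ∀ i, IsHyperplane (H i)) (hinj : Function.Injective H)
    (hgen : InGeneralPosition H) :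
    (components ((⋃ i, H i)ᶜ)).ncard = ∑ i ∈ Finset.range (d + 1), m.choose i :=
  num_chambers_general_position_general d m H hH hgen
end

section
/- (Deletion–Restriction) Let A be a finite set of pairwise distinct affine hyperplanes in ℝ^d and fix X ∈ A. Let A' = A ∖ {X}. Then the number of connected components of ℝ^d ∖ ⋃_{H ∈ A} H equals the number of connected components of ℝ^d ∖ ⋃_{H ∈ A'} H plus the number of connected components of X ∖ ⋃_{H ∈ A'} (H ∩ X). -/
open Classical

section Aux

open Set

/-- If `x` lies in a member of a pairwise-disjoint family of preconnected,
relatively open sets covering `S`, that member is its connected component in `S`. -/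
lemma connCompIn_eq {α : Type*} [TopologicalSpace α] {ι : Type*} {S : Set α} {C : ι → Set α}
    (hcover : S = ⋃ i, C i)
    (hconn : ∀ i, IsPreconnected (C i))
    (hopen : ∀ i, ∃ U, IsOpen U ∧ C i = S ∩ U)
    (hdisj : ∀ i j, i ≠ j → Disjoint (C i) (C j))
    {i : ι} {x : α} (hx : x ∈ C i) :
    connectedComponentIn S x = C i := by
  choose U hUo hCU using hopen
  have hCS : ∀ j, C j ⊆ S := fun j => hcover ▸ Set.subset_iUnion C j
  have hxS : x ∈ S := hCS i hx
  apply subset_antisymm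
  · set T := connectedComponentIn S x with hT
    have hTS : T ⊆ S := connectedComponentIn_subset S x
    set V : Set α := ⋃ j : {j // j ≠ i}, U j.1 with hV
    have hVo : IsOpen V := isOpen_iUnion fun j => hUo j.1
    have hTUV : T ⊆ U i ∪ V := by
      intro y hy
      have hyS : y ∈ S := hTS hy
      rw [hcover] at hyS
      obtain ⟨j, hj⟩ := Set.mem_iUnion.mp hyS
      by_cases hji : j = i
      · subst hji; left; exact ((hCU j) ▸ hj).2
      · right; exact Set.mem_iUnion.mpr ⟨⟨j, hji⟩, ((hCU j) ▸ hj).2⟩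
    have hempty : ¬ (T ∩ (U i ∩ V)).Nonempty := by
      rintro ⟨y, hyT, hyU, hyV⟩
      have hyS : y ∈ S := hTS hyT
      have hyCi : y ∈ C i := (hCU i) ▸ ⟨hyS, hyU⟩
      obtain ⟨⟨j, hji⟩, hyUj⟩ := Set.mem_iUnion.mp hyV
      have hyCj : y ∈ C j := (hCU j) ▸ ⟨hyS, hyUj⟩
      exact (hdisj j i hji).ne_of_mem hyCj hyCi rfl
    have hTV : ¬ (T ∩ V).Nonempty := by
      intro hTV
      exact hempty (isPreconnected_connectedComponentIn (U i) V (hUo i) hVo hTUV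
        ⟨x, mem_connectedComponentIn hxS, ((hCU i) ▸ hx).2⟩ hTV)
    have : T ⊆ U i := fun y hy => (hTUV hy).resolve_right fun h => hTV ⟨y, hy, h⟩
    intro y hy
    exact (hCU i) ▸ ⟨hTS hy, this hy⟩
  · exact (hconn i).subset_connectedComponentIn hx (hCS i)

lemma components_eq {α : Type*} [TopologicalSpace α] {ι : Type*} {S : Set α} {C : ι → Set α}
    (hcover : S = ⋃ i, C i)
    (hconn : ∀ i, IsPreconnected (C i))
    (hopen : ∀ i, ∃ U, IsOpen U ∧ C i = S ∩ U)
    (hdisj : ∀ i j, i ≠ j → Disjoint (C i) (C j)) :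
    components S = C '' {i | (C i).Nonempty} := by
  ext T
  constructor
  · rintro ⟨x, hxS, rfl⟩
    obtain ⟨i, hi⟩ := Set.mem_iUnion.mp (hcover ▸ hxS)
    exact ⟨i, ⟨x, hi⟩, (connCompIn_eq hcover hconn hopen hdisj hi).symm⟩
  · rintro ⟨i, ⟨x, hx⟩, rfl⟩
    exact ⟨x, hcover ▸ Set.subset_iUnion C i hx,
      (connCompIn_eq hcover hconn hopen hdisj hx).symm⟩

lemma components_card {α : Type*} [TopologicalSpace α] {ι : Type*} [Fintype ι]
    {S : Set α} {C : ι → Set α}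
    (hcover : S = ⋃ i, C i)
    (hconn : ∀ i, IsPreconnected (C i))
    (hopen : ∀ i, ∃ U, IsOpen U ∧ C i = S ∩ U)
    (hdisj : ∀ i j, i ≠ j → Disjoint (C i) (C j)) :
    (components S).Finite ∧
    (components S).ncard = (Finset.univ.filter fun i => (C i).Nonempty).card := by
  have heq := components_eq hcover hconn hopen hdisj
  have hinj : Set.InjOn C {i | (C i).Nonempty} := by
    intro i hi j hj hij
    by_contra hne
    obtain ⟨x, hx⟩ := hi
    exact (hdisj i j hne).ne_of_mem hx (hij ▸ hx) rfl
  constructor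
  · rw [heq]; exact (Set.toFinite _).image C
  · rw [heq, Set.ncard_image_of_injOn hinj, Set.ncard_eq_toFinset_card']
    congr 1
    ext i
    simp

lemma gcont {d : ℕ} (v : Fin d → ℝ) : Continuous (fun y : Fin d → ℝ => ∑ j, v j * y j) :=
  continuous_finset_sum Finset.univ (fun j _ => continuous_const.mul (continuous_apply j))

lemma glin {d : ℕ} (v : Fin d → ℝ) : IsLinearMap ℝ (fun y : Fin d → ℝ => ∑ j, v j * y j) := by
  constructor
  · intro a b
    rw [← Finset.sum_add_distrib]
    exact Finset.sum_congr rfl fun j _ => by simp [mul_add]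
  · intro r a
    rw [Finset.smul_sum]
    exact Finset.sum_congr rfl fun j _ => by simp [smul_eq_mul]; ring

lemma cross_nonempty {d : ℕ} {D : Set (Fin d → ℝ)} (hDo : IsOpen D)
    {v : Fin d → ℝ} (hv : v ≠ 0) {c : ℝ} {x : Fin d → ℝ}
    (hxD : x ∈ D) (hxX : ∑ j, v j * x j = c) :
    (D ∩ {y | c < ∑ j, v j * y j}).Nonempty ∧ (D ∩ {y | ∑ j, v j * y j < c}).Nonempty := by
  have hs : 0 < ∑ j, v j * v j := by
    obtain ⟨j₀, hj₀⟩ := Function.ne_iff.mp hv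
    exact Finset.sum_pos' (fun j _ => mul_self_nonneg (v j))
      ⟨j₀, Finset.mem_univ _, mul_self_pos.mpr (by simpa using hj₀)⟩
  have hφ : Continuous (fun t : ℝ => x + t • v) :=
    continuous_const.add (continuous_id.smul continuous_const)
  have hmem : (fun t : ℝ => x + t • v) ⁻¹' D ∈ nhds (0 : ℝ) := by
    refine (hDo.preimage hφ).mem_nhds ?_
    simp [hxD]
  obtain ⟨ε, hε, hball⟩ := Metric.mem_nhds_iff.mp hmem
  have key : ∀ t : ℝ, ∑ j, v j * (x + t • v) j = c + t * ∑ j, v j * v j := by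
    intro t
    calc ∑ j, v j * (x + t • v) j = ∑ j, (v j * x j + t * (v j * v j)) := by
          exact Finset.sum_congr rfl fun j _ => by simp [Pi.add_apply, smul_eq_mul]; ring
      _ = (∑ j, v j * x j) + t * ∑ j, v j * v j := by
          rw [Finset.sum_add_distrib, Finset.mul_sum]
      _ = c + t * ∑ j, v j * v j := by rw [hxX]
  have hmemt : ∀ t : ℝ, |t| < ε → x + t • v ∈ D := by
    intro t ht
    exact hball (by simpa [Real.dist_eq] using ht)
  constructor
  · refine ⟨x + (ε/2) • v, hmemt _ (by rw [abs_of_pos (by linarith)]; linarith), ?_⟩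
    rw [Set.mem_setOf_eq, key]
    nlinarith
  · refine ⟨x + (-(ε/2)) • v, hmemt _ (by rw [abs_of_neg (by linarith)]; linarith), ?_⟩
    rw [Set.mem_setOf_eq, key]
    nlinarith

lemma count_eq {d : ℕ} {D : Set (Fin d → ℝ)} (hDo : IsOpen D) (hDc : Convex ℝ D)
    {v : Fin d → ℝ} (hv : v ≠ 0) (c : ℝ) :
    ((if (D ∩ {y | c < ∑ j, v j * y j}).Nonempty then 1 else 0) : ℕ) +
      (if (D ∩ {y | ∑ j, v j * y j < c}).Nonempty then 1 else 0) =
    (if D.Nonempty then 1 else 0) +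
      (if (D ∩ {y | ∑ j, v j * y j = c}).Nonempty then 1 else 0) := by
  by_cases hm : (D ∩ {y | ∑ j, v j * y j = c}).Nonempty
  · obtain ⟨x, hxD, hxX⟩ := hm
    obtain ⟨h1, h2⟩ := cross_nonempty hDo hv hxD hxX
    rw [if_pos h1, if_pos h2, if_pos ⟨x, hxD⟩, if_pos ⟨x, hxD, hxX⟩]
  · by_cases hD : D.Nonempty
    · have hsub : D ⊆ {y | c < ∑ j, v j * y j} ∪ {y | ∑ j, v j * y j < c} := by
        intro y hy
        rcases lt_trichotomy (∑ j, v j * y j) c with h | h | h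
        · right; exact h
        · exact absurd ⟨y, hy, h⟩ hm
        · left; exact h
      have hnotboth : ¬ ((D ∩ {y | c < ∑ j, v j * y j}).Nonempty ∧
          (D ∩ {y | ∑ j, v j * y j < c}).Nonempty) := by
        rintro ⟨hp, hn⟩
        obtain ⟨z, -, hz1, hz2⟩ := hDc.isPreconnected _ _
          (isOpen_lt continuous_const (gcont v)) (isOpen_lt (gcont v) continuous_const)
          hsub hp hn
        simp only [Set.mem_setOf_eq] at hz1 hz2
        linarith
      have hone : (D ∩ {y | c < ∑ j, v j * y j}).Nonempty ∨
          (D ∩ {y | ∑ j, v j * y j < c}).Nonempty := by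
        obtain ⟨y, hy⟩ := hD
        rcases hsub hy with h | h
        · left; exact ⟨y, hy, h⟩
        · right; exact ⟨y, hy, h⟩
      rcases hone with h | h
      · have h2 : ¬ (D ∩ {y | ∑ j, v j * y j < c}).Nonempty := fun h2 => hnotboth ⟨h, h2⟩
        simp [h, h2, hD, hm]
      · have h2 : ¬ (D ∩ {y | c < ∑ j, v j * y j}).Nonempty := fun h2 => hnotboth ⟨h2, h⟩
        simp [h, h2, hD, hm]
    · rw [Set.not_nonempty_iff_eq_empty] at hD
      simp [hD]

/-- The core deletion–restriction count, for an arrangement given by linear data. -/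
lemma aux_count {d : ℕ} {ι : Type*} [Fintype ι] (w : ι → Fin d → ℝ) (cc : ι → ℝ)
    (hw : ∀ i, w i ≠ 0) (i₀ : ι) :
    (components {x : Fin d → ℝ | ∀ i, ∑ j, w i j * x j ≠ cc i}).Finite ∧
    (components {x : Fin d → ℝ |
        ∀ i : {i : ι // i ≠ i₀}, ∑ j, w i.1 j * x j ≠ cc i.1}).Finite ∧
    (components {x : Fin d → ℝ | (∑ j, w i₀ j * x j = cc i₀) ∧
        ∀ i : {i : ι // i ≠ i₀}, ∑ j, w i.1 j * x j ≠ cc i.1}).Finite ∧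
    (components {x : Fin d → ℝ | ∀ i, ∑ j, w i j * x j ≠ cc i}).ncard =
      (components {x : Fin d → ℝ |
          ∀ i : {i : ι // i ≠ i₀}, ∑ j, w i.1 j * x j ≠ cc i.1}).ncard +
      (components {x : Fin d → ℝ | (∑ j, w i₀ j * x j = cc i₀) ∧
          ∀ i : {i : ι // i ≠ i₀}, ∑ j, w i.1 j * x j ≠ cc i.1}).ncard := by
  classical
  set κ := {i : ι // i ≠ i₀} with hκ
  set S₁ := {x : Fin d → ℝ | ∀ i, ∑ j, w i j * x j ≠ cc i} with hS₁
  set S₂ := {x : Fin d → ℝ | ∀ i : κ, ∑ j, w i.1 j * x j ≠ cc i.1} with hS₂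
  set S₃ := {x : Fin d → ℝ | (∑ j, w i₀ j * x j = cc i₀) ∧
      ∀ i : κ, ∑ j, w i.1 j * x j ≠ cc i.1} with hS₃
  set HS : Bool → ι → Set (Fin d → ℝ) :=
    fun b i => cond b {x | cc i < ∑ j, w i j * x j} {x | ∑ j, w i j * x j < cc i} with hHS
  have hHSo : ∀ b i, IsOpen (HS b i) := by
    intro b i; cases b
    · exact isOpen_lt (gcont (w i)) continuous_const
    · exact isOpen_lt continuous_const (gcont (w i))
  have hHSc : ∀ b i, Convex ℝ (HS b i) := by
    intro b i; cases b
    · exact convex_halfSpace_lt (glin (w i)) (cc i)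
    · exact convex_halfSpace_gt (glin (w i)) (cc i)
  have hHSne : ∀ b i x, x ∈ HS b i → ∑ j, w i j * x j ≠ cc i := by
    intro b i x hx; cases b
    · exact ne_of_lt hx
    · exact ne_of_gt hx
  have hHSmem : ∀ i (x : Fin d → ℝ), (∑ j, w i j * x j ≠ cc i) →
      x ∈ HS (decide (cc i < ∑ j, w i j * x j)) i := by
    intro i x hx
    by_cases h : cc i < ∑ j, w i j * x j
    · rw [decide_eq_true h]; exact h
    · rw [decide_eq_false h]
      exact lt_of_le_of_ne (not_lt.mp h) hx
  have hHSdisj : ∀ i (x : Fin d → ℝ) b b', b ≠ b' → x ∈ HS b i → x ∈ HS b' i → False := by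
    intro i x b b' hbb hb hb'
    cases b <;> cases b' <;>
      simp only [hHS, Bool.cond_false, Bool.cond_true, Set.mem_setOf_eq] at hb hb'
    · exact hbb rfl
    · linarith
    · linarith
    · exact hbb rfl
  set Dm : (κ → Bool) → Set (Fin d → ℝ) := fun δ => ⋂ i : κ, HS (δ i) i.1 with hDm
  have hDmo : ∀ δ, IsOpen (Dm δ) := fun δ => isOpen_iInter_of_finite fun i => hHSo (δ i) i.1
  have hDmc : ∀ δ, Convex ℝ (Dm δ) := fun δ => convex_iInter fun i => hHSc (δ i) i.1
  have hDmmem : ∀ δ (x : Fin d → ℝ), x ∈ Dm δ ↔ ∀ i : κ, x ∈ HS (δ i) i.1 := by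
    intro δ x; exact Set.mem_iInter
  have hDmS₂ : ∀ δ, Dm δ ⊆ S₂ := by
    intro δ x hx i
    exact hHSne (δ i) i.1 x ((hDmmem δ x).mp hx i)
  have hDmdisj : ∀ δ δ' : κ → Bool, δ ≠ δ' → Disjoint (Dm δ) (Dm δ') := by
    intro δ δ' hne
    obtain ⟨i, hi⟩ := Function.ne_iff.mp hne
    rw [Set.disjoint_left]
    intro x hx hx'
    exact hHSdisj i.1 x (δ i) (δ' i) hi ((hDmmem δ x).mp hx i) ((hDmmem δ' x).mp hx' i)
  set Cm : ((κ → Bool) × Bool) → Set (Fin d → ℝ) := fun p => Dm p.1 ∩ HS p.2 i₀ with hCm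
  set Em : (κ → Bool) → Set (Fin d → ℝ) :=
    fun δ => Dm δ ∩ {x | ∑ j, w i₀ j * x j = cc i₀} with hEm
  -- covers
  have hcov₂ : S₂ = ⋃ δ : κ → Bool, Dm δ := by
    ext x
    constructor
    · intro hx
      refine Set.mem_iUnion.mpr ⟨fun i => decide (cc i.1 < ∑ j, w i.1 j * x j), ?_⟩
      exact (hDmmem _ x).mpr fun i => hHSmem i.1 x (hx i)
    · intro hx
      obtain ⟨δ, hδ⟩ := Set.mem_iUnion.mp hx
      exact hDmS₂ δ hδ
  have hCmS₁ : ∀ p, Cm p ⊆ S₁ := by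
    rintro ⟨δ, b⟩ x ⟨hx1, hx2⟩ i
    by_cases hi : i = i₀
    · subst hi; exact hHSne b i x hx2
    · exact hHSne (δ ⟨i, hi⟩) i x ((hDmmem δ x).mp hx1 ⟨i, hi⟩)
  have hcov₁ : S₁ = ⋃ p : (κ → Bool) × Bool, Cm p := by
    ext x
    constructor
    · intro hx
      refine Set.mem_iUnion.mpr ⟨⟨fun i => decide (cc i.1 < ∑ j, w i.1 j * x j),
        decide (cc i₀ < ∑ j, w i₀ j * x j)⟩, ?_, ?_⟩
      · exact (hDmmem _ x).mpr fun i => hHSmem i.1 x (hx i.1)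
      · exact hHSmem i₀ x (hx i₀)
    · intro hx
      obtain ⟨p, hp⟩ := Set.mem_iUnion.mp hx
      exact hCmS₁ p hp
  have hEmS₃ : ∀ δ, Em δ ⊆ S₃ := by
    rintro δ x ⟨hx1, hx2⟩
    exact ⟨hx2, hDmS₂ δ hx1⟩
  have hcov₃ : S₃ = ⋃ δ : κ → Bool, Em δ := by
    ext x
    constructor
    · rintro ⟨hx0, hx⟩
      refine Set.mem_iUnion.mpr ⟨fun i => decide (cc i.1 < ∑ j, w i.1 j * x j),
        ?_, hx0⟩
      exact (hDmmem _ x).mpr fun i => hHSmem i.1 x (hx i)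
    · intro hx
      obtain ⟨δ, hδ⟩ := Set.mem_iUnion.mp hx
      exact hEmS₃ δ hδ
  -- relative openness
  have hopen₂ : ∀ δ, ∃ U, IsOpen U ∧ Dm δ = S₂ ∩ U := by
    intro δ
    exact ⟨Dm δ, hDmo δ, (Set.inter_eq_self_of_subset_right (hDmS₂ δ)).symm⟩
  have hopen₁ : ∀ p, ∃ U, IsOpen U ∧ Cm p = S₁ ∩ U := by
    rintro ⟨δ, b⟩
    exact ⟨Cm (δ, b), (hDmo δ).inter (hHSo b i₀),
      (Set.inter_eq_self_of_subset_right (hCmS₁ (δ, b))).symm⟩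
  have hopen₃ : ∀ δ, ∃ U, IsOpen U ∧ Em δ = S₃ ∩ U := by
    intro δ
    refine ⟨Dm δ, hDmo δ, ?_⟩
    ext x
    constructor
    · rintro ⟨hx1, hx2⟩
      exact ⟨hEmS₃ δ ⟨hx1, hx2⟩, hx1⟩
    · rintro ⟨⟨hx0, -⟩, hx1⟩
      exact ⟨hx1, hx0⟩
  -- preconnectedness
  have hconn₂ : ∀ δ, IsPreconnected (Dm δ) := fun δ => (hDmc δ).isPreconnected
  have hconn₁ : ∀ p : (κ → Bool) × Bool, IsPreconnected (Cm p) :=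
    fun p => ((hDmc p.1).inter (hHSc p.2 i₀)).isPreconnected
  have hconn₃ : ∀ δ, IsPreconnected (Em δ) :=
    fun δ => ((hDmc δ).inter (convex_hyperplane (glin (w i₀)) (cc i₀))).isPreconnected
  -- disjointness
  have hdisj₂ : ∀ δ δ' : κ → Bool, δ ≠ δ' → Disjoint (Dm δ) (Dm δ') := hDmdisj
  have hdisj₁ : ∀ p p' : (κ → Bool) × Bool, p ≠ p' → Disjoint (Cm p) (Cm p') := by
    rintro ⟨δ, b⟩ ⟨δ', b'⟩ hne
    by_cases hδ : δ = δ'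
    · subst hδ
      have hb : b ≠ b' := fun h => hne (by rw [h])
      rw [Set.disjoint_left]
      rintro x ⟨-, hx2⟩ ⟨-, hx2'⟩
      exact hHSdisj i₀ x b b' hb hx2 hx2'
    · exact Set.disjoint_of_subset Set.inter_subset_left Set.inter_subset_left
        (hDmdisj δ δ' hδ)
  have hdisj₃ : ∀ δ δ' : κ → Bool, δ ≠ δ' → Disjoint (Em δ) (Em δ') := by
    intro δ δ' hne
    exact Set.disjoint_of_subset Set.inter_subset_left Set.inter_subset_left
      (hDmdisj δ δ' hne)
  obtain ⟨hf₁, hc₁⟩ := components_card hcov₁ hconn₁ hopen₁ hdisj₁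
  obtain ⟨hf₂, hc₂⟩ := components_card hcov₂ hconn₂ hopen₂ hdisj₂
  obtain ⟨hf₃, hc₃⟩ := components_card hcov₃ hconn₃ hopen₃ hdisj₃
  refine ⟨hf₁, hf₂, hf₃, ?_⟩
  rw [hc₁, hc₂, hc₃]
  rw [Finset.card_filter, Finset.card_filter, Finset.card_filter]
  rw [Fintype.sum_prod_type]
  have step : ∀ δ : κ → Bool,
      (∑ b : Bool, if (Cm (δ, b)).Nonempty then 1 else 0) =
      ((if (Dm δ).Nonempty then 1 else 0) + (if (Em δ).Nonempty then 1 else 0) : ℕ) := by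
    intro δ
    rw [Fintype.sum_bool]
    have h := count_eq (hDmo δ) (hDmc δ) (hw i₀) (cc i₀)
    have e1 : Cm (δ, true) = Dm δ ∩ {y | cc i₀ < ∑ j, w i₀ j * y j} := rfl
    have e2 : Cm (δ, false) = Dm δ ∩ {y | ∑ j, w i₀ j * y j < cc i₀} := rfl
    have e3 : Em δ = Dm δ ∩ {y | ∑ j, w i₀ j * y j = cc i₀} := rfl
    rw [e1, e2, e3]
    exact h
  rw [Finset.sum_congr rfl fun δ _ => step δ, Finset.sum_add_distrib]

end Aux

/-- Deletion–Restriction (Brylawski, Zaslavsky): for a finite arrangement `A` of pairwise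
distinct hyperplanes and a fixed `X ∈ A`, the number of chambers of `A` equals the number
of chambers of `A' = A \ {X}` plus the number of chambers of the restriction of `A'` to
`X`. -/
theorem deletion_restriction (d : ℕ) (A : Finset (Set (Fin d → ℝ)))
    (hA : ∀ H ∈ A, IsHyperplane H) (X : Set (Fin d → ℝ)) (hX : X ∈ A) :
    (components ((⋃ H ∈ A, H)ᶜ)).Finite ∧
    (components ((⋃ H ∈ A.erase X, H)ᶜ)).Finite ∧
    (components (X \ ⋃ H ∈ A.erase X, (H ∩ X))).Finite ∧
    (components ((⋃ H ∈ A, H)ᶜ)).ncard =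
      (components ((⋃ H ∈ A.erase X, H)ᶜ)).ncard +
        (components (X \ ⋃ H ∈ A.erase X, (H ∩ X))).ncard := by
  classical
  have hA' : ∀ i : {H : Set (Fin d → ℝ) // H ∈ A}, IsHyperplane i.1 := fun i => hA i.1 i.2
  choose w hw cc hcc using hA'
  have hmemH : ∀ (i : {H : Set (Fin d → ℝ) // H ∈ A}) (x : Fin d → ℝ),
      x ∈ i.1 ↔ ∑ j, w i j * x j = cc i := by
    intro i x
    conv_lhs => rw [hcc i]
    exact Iff.rfl
  have hκ : ∀ i : {H : Set (Fin d → ℝ) // H ∈ A},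
      (i ≠ (⟨X, hX⟩ : {H : Set (Fin d → ℝ) // H ∈ A})) ↔ i.1 ∈ A.erase X := by
    intro i
    rw [Finset.mem_erase]
    constructor
    · intro h
      exact ⟨fun he => h (Subtype.ext he), i.2⟩
    · intro h he
      exact h.1 (by rw [he])
  have E1 : (⋃ H ∈ A, H)ᶜ =
      {x : Fin d → ℝ | ∀ i : {H : Set (Fin d → ℝ) // H ∈ A}, ∑ j, w i j * x j ≠ cc i} := by
    ext x
    simp only [Set.mem_compl_iff, Set.mem_iUnion, not_exists, Set.mem_setOf_eq]
    constructor
    · intro h i hi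
      exact h i.1 i.2 ((hmemH i x).mpr hi)
    · intro h H hH hxH
      exact h ⟨H, hH⟩ ((hmemH ⟨H, hH⟩ x).mp hxH)
  have E2 : (⋃ H ∈ A.erase X, H)ᶜ =
      {x : Fin d → ℝ | ∀ i : {i : {H : Set (Fin d → ℝ) // H ∈ A} // i ≠ ⟨X, hX⟩},
        ∑ j, w i.1 j * x j ≠ cc i.1} := by
    ext x
    simp only [Set.mem_compl_iff, Set.mem_iUnion, not_exists, Set.mem_setOf_eq]
    constructor
    · intro h i hi
      exact h i.1.1 ((hκ i.1).mp i.2) ((hmemH i.1 x).mpr hi)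
    · intro h H hH hxH
      have hHA : H ∈ A := (Finset.mem_erase.mp hH).2
      exact h ⟨⟨H, hHA⟩, (hκ ⟨H, hHA⟩).mpr hH⟩ ((hmemH ⟨H, hHA⟩ x).mp hxH)
  have E3 : X \ ⋃ H ∈ A.erase X, (H ∩ X) =
      {x : Fin d → ℝ | (∑ j, w ⟨X, hX⟩ j * x j = cc ⟨X, hX⟩) ∧
        ∀ i : {i : {H : Set (Fin d → ℝ) // H ∈ A} // i ≠ ⟨X, hX⟩},
          ∑ j, w i.1 j * x j ≠ cc i.1} := by
    ext x
    simp only [Set.mem_diff, Set.mem_iUnion, not_exists, Set.mem_setOf_eq, Set.mem_inter_iff,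
      not_and]
    constructor
    · rintro ⟨hxX, h⟩
      refine ⟨(hmemH ⟨X, hX⟩ x).mp hxX, ?_⟩
      intro i hi
      exact h i.1.1 ((hκ i.1).mp i.2) ((hmemH i.1 x).mpr hi) hxX
    · rintro ⟨hx0, h⟩
      refine ⟨(hmemH ⟨X, hX⟩ x).mpr hx0, ?_⟩
      intro H hH hxH hxX
      have hHA : H ∈ A := (Finset.mem_erase.mp hH).2
      exact h ⟨⟨H, hHA⟩, (hκ ⟨H, hHA⟩).mpr hH⟩ ((hmemH ⟨H, hHA⟩ x).mp hxH)
  rw [E1, E2, E3]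
  exact aux_count w cc hw ⟨X, hX⟩
end

section
/- For all integers n ≥ 1 and 0 ≤ k with 2k ≤ n, the partial sum of binomial coefficients satisfies ∑_{i=0}^{k} C(n, i) ≤ 2^{n·H(k/n)}, where H is the binary entropy function. -/
/-!
Put `p = k / n ≤ 1/2`. Each term `C(n,i) p^i (1-p)^(n-i)` with `i ≤ k` is at least
`C(n,i) p^k (1-p)^(n-k)`, because trading a factor `p` for a factor `1-p ≥ p` only increases
it; the terms are part of the expansion of `(p + (1-p))^n = 1`. Hence
`∑_{i ≤ k} C(n,i) ≤ (p^k (1-p)^(n-k))⁻¹`, and the right-hand side is exactly `2^{n H(p)}`.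
-/

/-- The binary entropy function `H(p) = -p log₂ p - (1-p) log₂ (1-p)`
(with `H(0) = H(1) = 0`, using the convention `logb 2 0 = 0`). -/
noncomputable def binEntropy (p : ℝ) : ℝ :=
  -(p * Real.logb 2 p) - (1 - p) * Real.logb 2 (1 - p)

open Finset

theorem sum_range_choose_mul_pow_mul_pow_le_one {n k : ℕ} (hkn : k ≤ n) {p : ℝ}
    (hp₀ : 0 ≤ p) (hp₁ : p ≤ 1) :
    ∑ i ∈ range (k + 1), (n.choose i : ℝ) * p ^ i * (1 - p) ^ (n - i) ≤ 1 :=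
  calc ∑ i ∈ range (k + 1), (n.choose i : ℝ) * p ^ i * (1 - p) ^ (n - i)
      ≤ ∑ i ∈ range (n + 1), (n.choose i : ℝ) * p ^ i * (1 - p) ^ (n - i) :=
        sum_le_sum_of_subset_of_nonneg (range_subset_range.mpr (by omega))
          fun i _ _ ↦ by have := sub_nonneg.mpr hp₁; positivity
    _ = (p + (1 - p)) ^ n := by
        rw [add_pow]; exact sum_congr rfl fun i _ ↦ by ring
    _ = 1 := by simp

theorem pow_mul_pow_sub_le_pow_mul_pow_sub {R : Type*} [CommSemiring R] [PartialOrder R]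
    [IsOrderedRing R] {p q : R} (hp : 0 ≤ p) (hpq : p ≤ q) {i k n : ℕ} (hik : i ≤ k)
    (hkn : k ≤ n) : p ^ k * q ^ (n - k) ≤ p ^ i * q ^ (n - i) := by
  have hq : 0 ≤ q := hp.trans hpq
  calc p ^ k * q ^ (n - k) = p ^ i * p ^ (k - i) * q ^ (n - k) := by
        rw [← pow_add, Nat.add_sub_cancel' hik]
    _ ≤ p ^ i * q ^ (k - i) * q ^ (n - k) := by gcongr
    _ = p ^ i * q ^ (n - i) := by
        rw [mul_assoc, ← pow_add]; congr 2; omega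

theorem sum_range_choose_le_inv_pow_mul_pow {n k : ℕ} (hkn : k ≤ n) {p : ℝ} (hp₀ : 0 < p)
    (hp : p ≤ 1 - p) :
    ∑ i ∈ range (k + 1), (n.choose i : ℝ) ≤ (p ^ k * (1 - p) ^ (n - k))⁻¹ := by
  have hq : 0 < 1 - p := hp₀.trans_le hp
  rw [← one_div, le_div_iff₀ (by positivity), sum_mul]
  refine le_trans (sum_le_sum fun i hi ↦ ?_)
    (sum_range_choose_mul_pow_mul_pow_le_one hkn hp₀.le (by linarith))
  rw [mul_assoc (n.choose i : ℝ)]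
  exact mul_le_mul_of_nonneg_left
    (pow_mul_pow_sub_le_pow_mul_pow_sub hp₀.le hp (Nat.lt_succ_iff.mp (mem_range.mp hi)) hkn)
    (Nat.cast_nonneg _)

theorem two_rpow_natCast_mul_logb {x : ℝ} (hx : 0 < x) (m : ℕ) :
    (2 : ℝ) ^ ((m : ℝ) * Real.logb 2 x) = x ^ m := by
  rw [mul_comm, Real.rpow_mul zero_le_two, Real.rpow_logb zero_lt_two (by norm_num) hx,
    Real.rpow_natCast]

theorem two_rpow_mul_binEntropy_div {n k : ℕ} (hk : 0 < k) (hkn : k < n) :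
    (2 : ℝ) ^ ((n : ℝ) * binEntropy ((k : ℝ) / n)) =
      (((k : ℝ) / n) ^ k * (1 - (k : ℝ) / n) ^ (n - k))⁻¹ := by
  have hn : (0 : ℝ) < n := by exact_mod_cast hk.trans hkn
  set p := (k : ℝ) / n
  have hp : 0 < p := by positivity
  have hq : 0 < 1 - p := by
    rw [sub_pos, div_lt_one hn]; exact_mod_cast hkn
  have hnp : (n : ℝ) * p = k := mul_div_cancel₀ _ hn.ne'
  have hnq : (n : ℝ) * (1 - p) = ((n - k : ℕ) : ℝ) := by
    rw [mul_sub, mul_one, hnp, Nat.cast_sub hkn.le]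
  have hexponent : (n : ℝ) * binEntropy p =
      -((k : ℝ) * Real.logb 2 p + ((n - k : ℕ) : ℝ) * Real.logb 2 (1 - p)) := by
    rw [binEntropy, ← hnp, ← hnq]
    ring
  rw [hexponent, Real.rpow_neg zero_le_two, Real.rpow_add zero_lt_two,
    two_rpow_natCast_mul_logb hp, two_rpow_natCast_mul_logb hq]

theorem sum_choose_le_entropy_bound_general (n k : ℕ) (hk : 2 * k ≤ n) :
    ∑ i ∈ Finset.range (k + 1), (n.choose i : ℝ) ≤
      (2 : ℝ) ^ ((n : ℝ) * binEntropy ((k : ℝ) / n)) := by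
  rcases k.eq_zero_or_pos with rfl | hk₀
  · simp [binEntropy]
  have hkn : k < n := by omega
  have hn : (0 : ℝ) < n := by exact_mod_cast hk₀.trans hkn
  have hp : (k : ℝ) / n ≤ 1 - (k : ℝ) / n := by
    rw [le_sub_iff_add_le, ← two_mul, mul_div_assoc', div_le_one hn]
    exact_mod_cast hk
  rw [two_rpow_mul_binEntropy_div hk₀ hkn]
  exact sum_range_choose_le_inv_pow_mul_pow hkn.le (by positivity) hp

/-- For `0 ≤ k` with `2k ≤ n`, `∑_{i=0}^{k} C(n,i) ≤ 2^{n H(k/n)}`. -/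
theorem sum_choose_le_entropy_bound (n k : ℕ) (hn : 1 ≤ n) (hk : 2 * k ≤ n) :
    ∑ i ∈ Finset.range (k + 1), (n.choose i : ℝ) ≤
      (2 : ℝ) ^ ((n : ℝ) * binEntropy ((k : ℝ) / n)) :=
  sum_choose_le_entropy_bound_general n k hk
end

section
/- Let n ≥ 1 and let f : ℝ^n → ℝ^n be an affine map, f(x) = Wx + c with W an n×n real matrix and c ∈ ℝ^n. Then f is permutation-equivariant, i.e., f(σ·x) = σ·f(x) for every σ ∈ S_n and every x ∈ ℝ^n, if and only if there exist real numbers a, b, c₀ such that W = a·I + b·(I − 𝟙𝟙ᵀ) and c = c₀·𝟙, where I is the n×n identity matrix and 𝟙 ∈ ℝ^n is the all-ones vector. -/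
/-!
Taking `x = 0` shows that `c` is invariant under all coordinate permutations, and then the linear
part `W` must commute with them, i.e. `W (σ i) (σ j) = W i j`. Since `S_n` acts transitively both
on the diagonal pairs `(i, i)` and on the off-diagonal pairs `(i, j)`, `i ≠ j`, such a `W` takes
one value `a` on the diagonal and one value `-b` off it, and `c` is constant.
-/

/-- The coordinate-permutation action of `S_n` on ℝ^n: `(σ·x)_j = x_{σ⁻¹(j)}`. -/
def permAct {n : ℕ} (σ : Equiv.Perm (Fin n)) (x : Fin n → ℝ) : Fin n → ℝ :=
  fun j => x (σ⁻¹ j)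

theorem exists_forall_eq_of_pairwise_eq {α β : Type*} [Nonempty β] {p : α → Prop} {f : α → β}
    (h : ∀ a b, p a → p b → f a = f b) : ∃ y, ∀ a, p a → f a = y := by
  by_cases hp : ∃ a, p a
  · obtain ⟨a, ha⟩ := hp
    exact ⟨f a, fun b hb => h b a hb ha⟩
  · exact ⟨Classical.arbitrary β, fun a ha => (hp ⟨a, ha⟩).elim⟩

namespace Equiv.Perm

variable {ι : Type*} [DecidableEq ι]

theorem exists_apply_eq_and_apply_eq {i j k l : ι} (hij : i ≠ j) (hkl : k ≠ l) :
    ∃ σ : Perm ι, σ i = k ∧ σ j = l := by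
  have hk : k ≠ swap i k j := by
    simpa only [swap_apply_left] using (swap i k).injective.ne hij
  exact ⟨swap (swap i k j) l * swap i k, by simp [swap_apply_of_ne_of_ne hk hkl], by simp⟩

end Equiv.Perm

open Equiv Matrix

section PermInvariant

variable {ι α : Type*} [DecidableEq ι]

theorem forall_perm_comp_eq_iff [Nonempty α] {c : ι → α} :
    (∀ σ : Perm ι, c ∘ σ = c) ↔ ∃ c₀, c = fun _ => c₀ := by
  constructor
  · intro h
    have hconst : ∀ i j, c i = c j := fun i j => by
      simpa using congrFun (h (swap i j)) j
    obtain ⟨c₀, hc₀⟩ := exists_forall_eq_of_pairwise_eq (p := fun _ => True)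
      fun i j _ _ => hconst i j
    exact ⟨c₀, funext fun i => hc₀ i trivial⟩
  · rintro ⟨c₀, rfl⟩ σ
    rfl

variable [Ring α]

theorem Matrix.forall_perm_submatrix_eq_iff {W : Matrix ι ι α} :
    (∀ σ : Perm ι, W.submatrix σ σ = W) ↔
      ∃ a b : α, W = a • (1 : Matrix ι ι α) + b • (1 - of fun _ _ => 1) := by
  constructor
  · intro h
    have hW : ∀ (σ : Perm ι) i j, W (σ i) (σ j) = W i j := fun σ i j =>
      congrFun (congrFun (h σ) i) j
    obtain ⟨d, hd⟩ := exists_forall_eq_of_pairwise_eq (p := fun ij : ι × ι => ij.1 = ij.2)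
      (f := fun ij => W ij.1 ij.2) <| by
        rintro ⟨i, i'⟩ ⟨k, k'⟩ (hi : i = i') (hk : k = k')
        subst hi hk
        simpa using (hW (Equiv.swap i k) i i).symm
    obtain ⟨e, he⟩ := exists_forall_eq_of_pairwise_eq (p := fun ij : ι × ι => ij.1 ≠ ij.2)
      (f := fun ij => W ij.1 ij.2) <| by
        rintro ⟨i, j⟩ ⟨k, l⟩ hij hkl
        obtain ⟨σ, rfl, rfl⟩ := Perm.exists_apply_eq_and_apply_eq hij hkl
        exact (hW σ i j).symm
    refine ⟨d, -e, Matrix.ext fun i j => ?_⟩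
    by_cases hij : i = j
    · simp [hij, hd (j, j) rfl]
    · simp [hij, he (i, j) hij]
  · rintro ⟨a, b, rfl⟩ σ
    ext i j
    simp [one_apply]

end PermInvariant

section AffineEquivariance

variable {ι α : Type*} [Fintype ι]

theorem Matrix.mulVec_comp_symm_iff_submatrix_eq [NonAssocSemiring α]
    (W : Matrix ι ι α) (σ : ι ≃ ι) :
    (∀ x, W *ᵥ (x ∘ σ.symm) = (W *ᵥ x) ∘ σ.symm) ↔ W.submatrix σ σ = W := by
  constructor
  · intro h
    refine ext_iff_mulVec.2 fun v => ?_
    rw [submatrix_mulVec_equiv, h, Function.comp_assoc, σ.symm_comp_self, Function.comp_id]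
  · intro h x
    conv_rhs => rw [← h, submatrix_mulVec_equiv]
    rw [Function.comp_assoc, σ.self_comp_symm, Function.comp_id]

theorem Matrix.mulVec_add_comp_symm_iff [NonAssocRing α]
    (W : Matrix ι ι α) (c : ι → α) (σ : ι ≃ ι) :
    (∀ x, W *ᵥ (x ∘ σ.symm) + c = (W *ᵥ x + c) ∘ σ.symm) ↔ W.submatrix σ σ = W ∧ c ∘ σ = c := by
  rw [← mulVec_comp_symm_iff_submatrix_eq, ← σ.eq_comp_symm]
  constructor
  · intro h
    have hc : c = c ∘ σ.symm := by simpa using h 0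
    refine ⟨fun x => add_right_cancel (b := c) ?_, hc⟩
    rw [h x, Pi.add_comp, ← hc]
  · rintro ⟨hW, hc⟩ x
    rw [hW x, Pi.add_comp, ← hc]

end AffineEquivariance

theorem equivariant_iff_general (n : ℕ)
    (W : Matrix (Fin n) (Fin n) ℝ) (c : Fin n → ℝ) :
    (∀ σ : Equiv.Perm (Fin n), ∀ x : Fin n → ℝ,
        W.mulVec (permAct σ x) + c = permAct σ (W.mulVec x + c)) ↔
      ∃ a b c₀ : ℝ,
        W = a • (1 : Matrix (Fin n) (Fin n) ℝ) +
              b • ((1 : Matrix (Fin n) (Fin n) ℝ) - Matrix.of fun _ _ => (1 : ℝ)) ∧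
        c = fun _ => c₀ := by
  have hact : ∀ (σ : Perm (Fin n)) (x : Fin n → ℝ), permAct σ x = x ∘ σ.symm := fun _ _ => rfl
  simp only [hact, Matrix.mulVec_add_comp_symm_iff, forall_and, forall_perm_submatrix_eq_iff,
    forall_perm_comp_eq_iff, exists_and_left, exists_and_right]

/-- An affine map `f(x) = Wx + c` on ℝ^n is permutation-equivariant iff
`W = aI + b(I - 𝟙𝟙ᵀ)` and `c = c₀𝟙` for some reals `a, b, c₀`. -/
theorem equivariant_iff (n : ℕ) (hn : 1 ≤ n)
    (W : Matrix (Fin n) (Fin n) ℝ) (c : Fin n → ℝ) :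
    (∀ σ : Equiv.Perm (Fin n), ∀ x : Fin n → ℝ,
        W.mulVec (permAct σ x) + c = permAct σ (W.mulVec x + c)) ↔
      ∃ a b c₀ : ℝ,
        W = a • (1 : Matrix (Fin n) (Fin n) ℝ) +
              b • ((1 : Matrix (Fin n) (Fin n) ℝ) - Matrix.of fun _ _ => (1 : ℝ)) ∧
        c = fun _ => c₀ :=
  equivariant_iff_general n W c
end

section
/- Let n ≥ 2, m ≥ 1, and let a_1, …, a_m, b_1, …, b_m, c_1, …, c_m be real numbers. For i ∈ {1, …, m} and j ∈ {1, …, n}, let H_{ij} = {x ∈ ℝ^n : a_i x_j + b_i ∑_{k ≠ j} x_k + c_i = 0}. If i₁ ≠ i₂, j₁ ≠ j₂, a_{i₁} ≠ b_{i₁} and a_{i₂} ≠ b_{i₂}, then H_{i₁,j₁} ∩ H_{i₁,j₂} ∩ H_{i₂,j₁} = H_{i₁,j₁} ∩ H_{i₁,j₂} ∩ H_{i₂,j₂} = H_{i₁,j₁} ∩ H_{i₂,j₁} ∩ H_{i₂,j₂}. -/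
/-!
Writing `S = ∑ₖ xₖ`, the hyperplane `H_{ij}` is `(aᵢ - bᵢ) xⱼ + bᵢ S + cᵢ = 0`. Hence two
hyperplanes `H_{ij₁}, H_{ij₂}` with `aᵢ ≠ bᵢ` meet only where `x_{j₁} = x_{j₂}`, and on that
locus `H_{ij₁}` and `H_{ij₂}` coincide for every `i`. Each of the three triple intersections
contains such a pair, so each equals the intersection of all four hyperplanes.
-/

/-- The hyperplane `H_{ij} = {x ∈ ℝ^n : a_i x_j + b_i ∑_{k ≠ j} x_k + c_i = 0}` of the
permutation-invariant arrangement. -/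
def Hset {m n : ℕ} (a b c : Fin m → ℝ) (i : Fin m) (j : Fin n) : Set (Fin n → ℝ) :=
  {x | a i * x j + b i * ∑ k ∈ Finset.univ.erase j, x k + c i = 0}

section Hset

variable {m n : ℕ} {a b c : Fin m → ℝ} {i : Fin m} {j j₁ j₂ : Fin n} {x : Fin n → ℝ}

theorem mem_Hset_iff :
    x ∈ Hset a b c i j ↔ (a i - b i) * x j + b i * ∑ k, x k + c i = 0 := by
  rw [Hset, Set.mem_ofPred_eq, Finset.sum_erase_eq_sub (Finset.mem_univ j)]
  constructor <;> intro h <;> linarith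

theorem apply_eq_of_mem_Hset (ha : a i ≠ b i) (h₁ : x ∈ Hset a b c i j₁)
    (h₂ : x ∈ Hset a b c i j₂) : x j₁ = x j₂ := by
  rw [mem_Hset_iff] at h₁ h₂
  have h : (a i - b i) * (x j₁ - x j₂) = 0 := by linarith
  simpa [sub_eq_zero, ha] using h

theorem mem_Hset_congr (hx : x j₁ = x j₂) : x ∈ Hset a b c i j₁ ↔ x ∈ Hset a b c i j₂ := by
  rw [mem_Hset_iff, mem_Hset_iff, hx]

end Hset

theorem triple_intersections_general (m n : ℕ)
    (a b c : Fin m → ℝ) (i₁ i₂ : Fin m) (j₁ j₂ : Fin n)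
    (ha1 : a i₁ ≠ b i₁) (ha2 : a i₂ ≠ b i₂) :
    Hset a b c i₁ j₁ ∩ Hset a b c i₁ j₂ ∩ Hset a b c i₂ j₁ =
      Hset a b c i₁ j₁ ∩ Hset a b c i₁ j₂ ∩ Hset a b c i₂ j₂ ∧
    Hset a b c i₁ j₁ ∩ Hset a b c i₁ j₂ ∩ Hset a b c i₂ j₂ =
      Hset a b c i₁ j₁ ∩ Hset a b c i₂ j₁ ∩ Hset a b c i₂ j₂ := by
  constructor <;> ext x <;> simp only [Set.mem_inter_iff]
  all_goals
    by_cases hx : x j₁ = x j₂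
    · simp only [mem_Hset_congr hx, and_assoc, and_self]
    · have h₁ : ¬(x ∈ Hset a b c i₁ j₁ ∧ x ∈ Hset a b c i₁ j₂) :=
        fun h => hx (apply_eq_of_mem_Hset ha1 h.1 h.2)
      have h₂ : ¬(x ∈ Hset a b c i₂ j₁ ∧ x ∈ Hset a b c i₂ j₂) :=
        fun h => hx (apply_eq_of_mem_Hset ha2 h.1 h.2)
      tauto

/-- The triple-intersection relations of the permutation-invariant arrangement. -/
theorem triple_intersections (m n : ℕ) (hn : 2 ≤ n) (hm : 1 ≤ m)
    (a b c : Fin m → ℝ) (i₁ i₂ : Fin m) (j₁ j₂ : Fin n)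
    (hi : i₁ ≠ i₂) (hj : j₁ ≠ j₂) (ha1 : a i₁ ≠ b i₁) (ha2 : a i₂ ≠ b i₂) :
    Hset a b c i₁ j₁ ∩ Hset a b c i₁ j₂ ∩ Hset a b c i₂ j₁ =
      Hset a b c i₁ j₁ ∩ Hset a b c i₁ j₂ ∩ Hset a b c i₂ j₂ ∧
    Hset a b c i₁ j₁ ∩ Hset a b c i₁ j₂ ∩ Hset a b c i₂ j₂ =
      Hset a b c i₁ j₁ ∩ Hset a b c i₂ j₁ ∩ Hset a b c i₂ j₂ :=
  triple_intersections_general m n a b c i₁ i₂ j₁ j₂ ha1 ha2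
end

section
/- Let n ≥ 2 and let B be a finite set of affine hyperplanes in ℝ^n that is stable under the coordinate-permutation action of S_n (i.e., σ(H) ∈ B for every σ ∈ S_n and H ∈ B), and such that no element of B equals any braid hyperplane W_{pq} = {x ∈ ℝ^n : x_p = x_q}, 1 ≤ p < q ≤ n. Let C = B ∪ {W_{pq} : 1 ≤ p < q ≤ n}. Then the number of connected components of ℝ^n ∖ ⋃_{H ∈ C} H equals n! times the number of S_n-orbits of the set of connected components of ℝ^n ∖ ⋃_{H ∈ B} H. -/
/-- The `S_n`-orbits of a collection of subsets of ℝ^n under the coordinate-permutation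
action. -/
def orbitsOf {n : ℕ} (comps : Set (Set (Fin n → ℝ))) : Set (Set (Set (Fin n → ℝ))) :=
  (fun C => {C' | ∃ σ : Equiv.Perm (Fin n), C' = permAct σ '' C}) '' comps

/-!
The complement `M` of `⋃ B` is open and `S_n`-stable, and its chambers are convex, being
intersections of open half-spaces. Adding the braid hyperplanes cuts a chamber `D` of `B` into the
convex pieces `D ∩ W_σ`, where `W_σ` is the Weyl chamber of points sorted by `σ`; so the
chambers of `C` are the nonempty sets `D ∩ W_σ`. For each `σ`, every `S_n`-orbit of chambers of
`B` contains exactly one chamber meeting `W_σ`: some chamber of the orbit does, since `D` contains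
a point with distinct coordinates, which a permutation moves into `W_σ`; only one does, since the
stabiliser of `D` moves any point of `D` into the Weyl chamber of any other point of `D`. This
gives `n!` chambers of `C` for each orbit.
-/

open Set Function Equiv MeasureTheory

section ConvexComponents

variable {E : Type*} [AddCommGroup E] [Module ℝ E] [TopologicalSpace E] [ContinuousAdd E]
  [ContinuousSMul ℝ E]

theorem connectedComponentIn_eq_of_isOpen_union {X : Type*} [TopologicalSpace X]
    {U V W : Set X} {x : X} (hV : IsOpen V) (hW : IsOpen W) (hVW : Disjoint V W)
    (hU : U = V ∪ W) (hVc : IsPreconnected V) (hx : x ∈ V) : connectedComponentIn U x = V := by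
  subst hU
  refine Subset.antisymm ?_ (hVc.subset_connectedComponentIn hx subset_union_left)
  exact isPreconnected_connectedComponentIn.subset_left_of_subset_union hV hW hVW
    (connectedComponentIn_subset _ _) ⟨x, mem_connectedComponentIn (Or.inl hx), hx⟩

theorem convex_connectedComponentIn_compl_level {f : E → ℝ} (hlin : IsLinearMap ℝ f)
    (hf : Continuous f) (c : ℝ) (x : E) :
    Convex ℝ (connectedComponentIn {y | f y = c}ᶜ x) := by
  have hsplit : {y | f y = c}ᶜ = {y | f y < c} ∪ {y | c < f y} := by
    ext y; exact ne_iff_lt_or_gt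
  have hlt : IsOpen {y | f y < c} := isOpen_lt hf continuous_const
  have hgt : IsOpen {y | c < f y} := isOpen_lt continuous_const hf
  have hdisj : Disjoint {y | f y < c} {y | c < f y} :=
    disjoint_left.2 fun _ h₁ h₂ => lt_asymm (α := ℝ) h₁ h₂
  rcases lt_trichotomy (f x) c with h | h | h
  · rw [connectedComponentIn_eq_of_isOpen_union hlt hgt hdisj hsplit
      (convex_halfSpace_lt hlin c).isPreconnected h]
    exact convex_halfSpace_lt hlin c
  · rw [connectedComponentIn_eq_empty (by simpa using h)]
    exact convex_empty
  · rw [connectedComponentIn_eq_of_isOpen_union hgt hlt hdisj.symm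
      (hsplit.trans (union_comm _ _)) (convex_halfSpace_gt hlin c).isPreconnected h]
    exact convex_halfSpace_gt hlin c

theorem convex_connectedComponentIn_sInter {S : Set (Set E)} {x : E}
    (hS : ∀ U ∈ S, Convex ℝ (connectedComponentIn U x)) :
    Convex ℝ (connectedComponentIn (⋂₀ S) x) := by
  by_cases hx : x ∉ ⋂₀ S
  · rw [connectedComponentIn_eq_empty hx]
    exact convex_empty
  rw [not_not] at hx
  suffices h : connectedComponentIn (⋂₀ S) x = ⋂ U ∈ S, connectedComponentIn U x by
    rw [h]
    exact convex_iInter₂ hS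
  refine Subset.antisymm
    (subset_iInter₂ fun U hU => connectedComponentIn_mono _ (sInter_subset_of_mem hU))
    ((convex_iInter₂ hS).isPreconnected.subset_connectedComponentIn
      (mem_iInter₂.2 fun U hU => mem_connectedComponentIn (hx U hU)) ?_)
  exact subset_sInter fun U hU => (iInter₂_subset U hU).trans (connectedComponentIn_subset _ _)

end ConvexComponents

theorem Set.ncard_image_eq_ncard_image_of_eq_iff {α β γ : Type*} {s : Set α} {f : α → β}
    {g : α → γ} (h : ∀ x ∈ s, ∀ y ∈ s, f x = f y ↔ g x = g y) :
    (f '' s).ncard = (g '' s).ncard := by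
  refine ncard_congr (fun b hb => g (Classical.choose hb))
    (fun b hb => ⟨_, (Classical.choose_spec hb).1, rfl⟩) (fun b b' hb hb' hbb' => ?_) ?_
  · obtain ⟨hx, hfx⟩ := Classical.choose_spec hb
    obtain ⟨hx', hfx'⟩ := Classical.choose_spec hb'
    rw [← hfx, ← hfx']
    exact (h _ hx _ hx').2 hbb'
  · rintro _ ⟨x, hx, rfl⟩
    have hb : f x ∈ f '' s := mem_image_of_mem f hx
    obtain ⟨hx', hfx⟩ := Classical.choose_spec hb
    exact ⟨f x, hb, (h _ hx' _ hx).1 hfx⟩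

section Permutations

variable {n : ℕ}

@[simp]
theorem permAct_apply (σ : Perm (Fin n)) (x : Fin n → ℝ) (j : Fin n) :
    permAct σ x j = x (σ⁻¹ j) := rfl

@[simp]
theorem permAct_one : permAct (1 : Perm (Fin n)) = id := rfl

theorem permAct_mul (σ τ : Perm (Fin n)) : permAct (σ * τ) = permAct σ ∘ permAct τ := by
  ext x j; simp [mul_inv_rev]

theorem image_permAct_mul (σ τ : Perm (Fin n)) (s : Set (Fin n → ℝ)) :
    permAct (σ * τ) '' s = permAct σ '' (permAct τ '' s) := by
  rw [permAct_mul, image_comp]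

theorem permAct_inv_permAct (σ : Perm (Fin n)) (x : Fin n → ℝ) :
    permAct σ⁻¹ (permAct σ x) = x := by
  ext j; simp

theorem permAct_permAct_inv (σ : Perm (Fin n)) (x : Fin n → ℝ) :
    permAct σ (permAct σ⁻¹ x) = x := by
  simpa using permAct_inv_permAct σ⁻¹ x

def permHomeo (σ : Perm (Fin n)) : (Fin n → ℝ) ≃ₜ (Fin n → ℝ) where
  toFun := permAct σ
  invFun := permAct σ⁻¹
  left_inv := permAct_inv_permAct σ
  right_inv := permAct_permAct_inv σ
  continuous_toFun := by unfold permAct; fun_prop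
  continuous_invFun := by unfold permAct; fun_prop

theorem permAct_swap_of_eq {x : Fin n → ℝ} {p q : Fin n} (h : x p = x q) :
    permAct (swap p q) x = x := by
  ext j
  rw [permAct_apply, swap_inv]
  rcases eq_or_ne j p with rfl | hp
  · rw [swap_apply_left, h]
  rcases eq_or_ne j q with rfl | hq
  · rw [swap_apply_right, h]
  · rw [swap_apply_of_ne_of_ne hp hq]

theorem sum_permAct_swap_mul (w x : Fin n → ℝ) {p q : Fin n} (hpq : p ≠ q) :
    ∑ i, permAct (swap p q) w i * x i = ∑ i, w i * x i + (w p - w q) * (x q - x p) := by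
  have h : ∑ i, (permAct (swap p q) w i - w i) * x i
      = (w q - w p) * x p + (w p - w q) * x q := by
    rw [Fintype.sum_eq_add p q hpq fun i hi => by
      simp [swap_apply_of_ne_of_ne hi.1 hi.2]]
    simp
  simp only [sub_mul, Finset.sum_sub_distrib] at h
  linarith

def weylChamber (σ : Perm (Fin n)) : Set (Fin n → ℝ) := {v | StrictMono (v ∘ σ)}

theorem convex_weylChamber (σ : Perm (Fin n)) : Convex ℝ (weylChamber σ) := by
  intro v hv w hw a b ha hb hab i j hij
  have h₁ := hv hij
  have h₂ := hw hij
  simp only [comp_apply, Pi.add_apply, Pi.smul_apply, smul_eq_mul] at h₁ h₂ ⊢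
  rcases ha.eq_or_lt with rfl | ha <;> nlinarith

theorem injective_of_mem_weylChamber {σ : Perm (Fin n)} {v : Fin n → ℝ}
    (hv : v ∈ weylChamber σ) : Injective v := by
  have : Injective (v ∘ σ) := StrictMono.injective hv
  simpa using this.comp σ.symm.injective

theorem mem_weylChamber_sort {v : Fin n → ℝ} (hv : Injective v) :
    v ∈ weylChamber (Tuple.sort v) :=
  (Tuple.monotone_sort v).strictMono_of_injective (hv.comp (Equiv.injective _))

theorem eq_sort_of_mem_weylChamber {σ : Perm (Fin n)} {v : Fin n → ℝ}
    (hv : v ∈ weylChamber σ) : σ = Tuple.sort v :=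
  Tuple.eq_sort_iff.2 ⟨StrictMono.monotone hv, fun _ _ hij he => absurd he (hv hij).ne⟩

theorem permAct_mem_weylChamber_iff {σ τ : Perm (Fin n)} {v : Fin n → ℝ} :
    permAct τ v ∈ weylChamber σ ↔ v ∈ weylChamber (τ⁻¹ * σ) := Iff.rfl

theorem mem_weylChamber_of_lt_imp_le {σ : Perm (Fin n)} {x v : Fin n → ℝ}
    (hx : x ∈ weylChamber σ) (hv : Injective v) (h : ∀ p q, x p < x q → v p ≤ v q) :
    v ∈ weylChamber σ :=
  fun _ _ hij => (h _ _ (hx hij)).lt_of_ne (hv.ne (σ.injective.ne hij.ne))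

theorem IsPreconnected.mem_weylChamber {σ : Perm (Fin n)} {s : Set (Fin n → ℝ)}
    (hs : IsPreconnected s) (hinj : ∀ v ∈ s, Injective v) {a b : Fin n → ℝ} (ha : a ∈ s)
    (haσ : a ∈ weylChamber σ) (hb : b ∈ s) : b ∈ weylChamber σ := by
  intro i j hij
  by_contra! hle
  obtain ⟨v, hv, hv0⟩ := hs.intermediate_value hb ha
    (f := fun v => v (σ j) - v (σ i)) (by fun_prop : Continuous _).continuousOn
    ⟨sub_nonpos.2 hle, (sub_pos.2 (haσ hij)).le⟩
  exact hij.ne (σ.injective (hinj v hv (sub_eq_zero.1 hv0)).symm)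

theorem exists_injective_mem_of_isOpen {U : Set (Fin n → ℝ)} (hU : IsOpen U)
    (hne : U.Nonempty) : ∃ y ∈ U, Injective y := by
  let wall (p q : Fin n) : Submodule ℝ (Fin n → ℝ) :=
    LinearMap.ker (LinearMap.proj (R := ℝ) (φ := fun _ : Fin n => ℝ) p - LinearMap.proj q)
  have hwall (p q : Fin n) (hpq : p ≠ q) : volume (wall p q : Set (Fin n → ℝ)) = 0 := by
    refine Measure.addHaar_submodule _ _ fun htop => ?_
    have : Pi.single p (1 : ℝ) ∈ wall p q := htop ▸ Submodule.mem_top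
    simp [wall, hpq.symm] at this
  have hnull : volume {v : Fin n → ℝ | ¬ Injective v} = 0 := by
    refine measure_mono_null (fun v hv => ?_)
      (measure_iUnion_null fun p => measure_iUnion_null fun q => measure_iUnion_null (hwall p q))
    obtain ⟨p, q, hvpq, hpq⟩ : ∃ p q, v p = v q ∧ p ≠ q := by simpa [Injective] using hv
    exact mem_iUnion₂.2 ⟨p, q, mem_iUnion.2 ⟨hpq, by simp [wall, hvpq]⟩⟩
  by_contra! h
  exact (hU.measure_pos _ hne).ne' (measure_mono_null h hnull)

end Permutations

section StableSet

variable {n : ℕ} {M : Set (Fin n → ℝ)}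

def permOrbit (C : Set (Fin n → ℝ)) : Set (Set (Fin n → ℝ)) :=
  {C' | ∃ σ : Perm (Fin n), C' = permAct σ '' C}

theorem mem_permOrbit_self (C : Set (Fin n → ℝ)) : C ∈ permOrbit C :=
  ⟨1, by simp⟩

theorem permOrbit_image_permAct (τ : Perm (Fin n)) (C : Set (Fin n → ℝ)) :
    permOrbit (permAct τ '' C) = permOrbit C := by
  ext C'
  constructor
  · rintro ⟨σ, rfl⟩
    exact ⟨σ * τ, (image_permAct_mul σ τ C).symm⟩
  · rintro ⟨σ, rfl⟩
    exact ⟨σ * τ⁻¹, by rw [← image_permAct_mul, inv_mul_cancel_right]⟩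

theorem image_permAct_connectedComponentIn (hM : ∀ σ, ∀ x ∈ M, permAct σ x ∈ M)
    (σ : Perm (Fin n)) {x : Fin n → ℝ} (hx : x ∈ M) :
    permAct σ '' connectedComponentIn M x = connectedComponentIn M (permAct σ x) := by
  have hMσ : permAct σ '' M = M :=
    (image_subset_iff.2 fun y hy => hM σ y hy).antisymm fun y hy =>
      ⟨permAct σ⁻¹ y, hM σ⁻¹ y hy, permAct_permAct_inv σ y⟩
  have := (permHomeo σ).image_connectedComponentIn hx
  rwa [show ⇑(permHomeo σ) = permAct σ from rfl, hMσ] at this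

/-- Take `g` in the stabiliser of `D = connectedComponentIn M x` maximising `⟨g • z, x⟩`: were
`(g • z)_p > (g • z)_q` with `x_p < x_q`, the segment from `x` to `g • z` would cross the wall
`v_p = v_q` inside the convex set `D`, so the transposition `(p q)` would stabilise `D` and
increase `⟨g • z, x⟩`. -/
theorem exists_stabilizer_lt_imp_le (hM : ∀ σ, ∀ x ∈ M, permAct σ x ∈ M)
    (hconv : ∀ x, Convex ℝ (connectedComponentIn M x)) {x z : Fin n → ℝ} (hx : x ∈ M)
    (hz : z ∈ connectedComponentIn M x) :
    ∃ g : Perm (Fin n), permAct g '' connectedComponentIn M x = connectedComponentIn M x ∧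
      ∀ p q, x p < x q → permAct g z p ≤ permAct g z q := by
  classical
  set D := connectedComponentIn M x
  obtain ⟨g, hg, hmax⟩ := Finset.exists_max_image
    (Finset.univ.filter fun g : Perm (Fin n) => permAct g '' D = D)
    (fun g => ∑ i, permAct g z i * x i) ⟨1, by simp⟩
  have hgD : permAct g '' D = D := (Finset.mem_filter.1 hg).2
  refine ⟨g, hgD, fun p q hxpq => not_lt.1 fun hwqp => ?_⟩
  have hpq : p ≠ q := fun h => hxpq.ne (congrArg x h)
  set w := permAct g z
  have hwD : w ∈ D := hgD ▸ mem_image_of_mem _ hz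
  obtain ⟨u, hu, hupq⟩ := (convex_segment x w).isPreconnected.intermediate_value
    (left_mem_segment ℝ x w) (right_mem_segment ℝ x w)
    (f := fun v => v p - v q) (by fun_prop : Continuous _).continuousOn
    ⟨(sub_neg.2 hxpq).le, (sub_pos.2 hwqp).le⟩
  have huD : u ∈ D := (hconv x).segment_subset (mem_connectedComponentIn hx) hwD hu
  have hswapD : permAct (swap p q) '' D = D := by
    rw [show D = connectedComponentIn M u from connectedComponentIn_eq huD,
      image_permAct_connectedComponentIn hM _
      (connectedComponentIn_subset _ _ huD), permAct_swap_of_eq (sub_eq_zero.1 hupq)]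
  have hle := hmax (swap p q * g) (Finset.mem_filter.2 ⟨Finset.mem_univ _,
    by rw [image_permAct_mul, hgD, hswapD]⟩)
  rw [permAct_mul, comp_apply, sum_permAct_swap_mul _ _ hpq] at hle
  nlinarith

theorem image_permAct_eq_of_mem_weylChamber (hM : ∀ σ, ∀ x ∈ M, permAct σ x ∈ M)
    (hconv : ∀ x, Convex ℝ (connectedComponentIn M x)) {σ τ : Perm (Fin n)}
    {x y : Fin n → ℝ} (hx : x ∈ M) (hxσ : x ∈ weylChamber σ)
    (hy : y ∈ permAct τ '' connectedComponentIn M x) (hyσ : y ∈ weylChamber σ) :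
    permAct τ '' connectedComponentIn M x = connectedComponentIn M x := by
  obtain ⟨z, hz, rfl⟩ := hy
  rw [permAct_mem_weylChamber_iff] at hyσ
  obtain ⟨g, hgD, hle⟩ := exists_stabilizer_lt_imp_le hM hconv hx hz
  have hgz : z ∈ weylChamber (g⁻¹ * σ) := permAct_mem_weylChamber_iff.1 <|
    mem_weylChamber_of_lt_imp_le hxσ
      ((injective_of_mem_weylChamber hyσ).comp (Equiv.injective _)) hle
  have hgτ : g = τ := by
    simpa using (eq_sort_of_mem_weylChamber hgz).trans (eq_sort_of_mem_weylChamber hyσ).symm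
  rwa [← hgτ]

theorem connectedComponentIn_inter_injective (hconv : ∀ x, Convex ℝ (connectedComponentIn M x))
    {x : Fin n → ℝ} (hx : x ∈ M) (hinj : Injective x) :
    connectedComponentIn (M ∩ {v | Injective v}) x =
      connectedComponentIn M x ∩ weylChamber (Tuple.sort x) := by
  have hxσ := mem_weylChamber_sort hinj
  have hxS : x ∈ M ∩ {v | Injective v} := ⟨hx, hinj⟩
  refine Subset.antisymm (subset_inter (connectedComponentIn_mono _ inter_subset_left)
    fun y hy => isPreconnected_connectedComponentIn.mem_weylChamber
      (fun v hv => (connectedComponentIn_subset _ _ hv).2)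
      (mem_connectedComponentIn hxS) hxσ hy) ?_
  exact ((hconv x).inter (convex_weylChamber _)).isPreconnected.subset_connectedComponentIn
    (mem_inter (mem_connectedComponentIn hx) hxσ)
    fun y hy => ⟨connectedComponentIn_subset _ _ hy.1, injective_of_mem_weylChamber hy.2⟩

theorem components_eq_image {X : Type*} [TopologicalSpace X] (S : Set X) :
    components S = connectedComponentIn S '' S := by
  ext C
  exact exists_congr fun x => and_congr_right fun _ => eq_comm

theorem connectedComponentIn_inter_injective_eq_iff (hM : ∀ σ, ∀ x ∈ M, permAct σ x ∈ M)
    (hconv : ∀ x, Convex ℝ (connectedComponentIn M x)) {x y : Fin n → ℝ}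
    (hx : x ∈ M ∩ {v | Injective v}) (hy : y ∈ M ∩ {v | Injective v}) :
    connectedComponentIn (M ∩ {v | Injective v}) x =
        connectedComponentIn (M ∩ {v | Injective v}) y ↔
      Tuple.sort x = Tuple.sort y ∧
        permOrbit (connectedComponentIn M x) = permOrbit (connectedComponentIn M y) := by
  rw [connectedComponentIn_inter_injective hconv hx.1 hx.2,
    connectedComponentIn_inter_injective hconv hy.1 hy.2]
  constructor
  · intro h
    have hyx : y ∈ connectedComponentIn M x ∩ weylChamber (Tuple.sort x) :=
      h ▸ ⟨mem_connectedComponentIn hy.1, mem_weylChamber_sort hy.2⟩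
    rw [eq_sort_of_mem_weylChamber hyx.2, ← connectedComponentIn_eq hyx.1]
    exact ⟨rfl, rfl⟩
  · rintro ⟨hσ, horb⟩
    obtain ⟨τ, hτ⟩ : connectedComponentIn M y ∈ permOrbit (connectedComponentIn M x) :=
      horb ▸ mem_permOrbit_self _
    have hyσ : y ∈ weylChamber (Tuple.sort x) := hσ ▸ mem_weylChamber_sort hy.2
    rw [hτ, image_permAct_eq_of_mem_weylChamber hM hconv hx.1 (mem_weylChamber_sort hx.2)
      (hτ ▸ mem_connectedComponentIn hy.1) hyσ, hσ]

theorem image_sort_permOrbit (hopen : IsOpen M) (hM : ∀ σ, ∀ x ∈ M, permAct σ x ∈ M) :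
    (fun x => (Tuple.sort x, permOrbit (connectedComponentIn M x))) '' (M ∩ {v | Injective v}) =
      univ ×ˢ orbitsOf (components M) := by
  refine Subset.antisymm ?_ ?_
  · rintro _ ⟨x, hx, rfl⟩
    exact ⟨mem_univ _, _, ⟨x, hx.1, rfl⟩, rfl⟩
  · rintro ⟨σ, _⟩ ⟨-, _, ⟨x₀, hx₀, rfl⟩, rfl⟩
    obtain ⟨y₀, hy₀, hy₀inj⟩ := exists_injective_mem_of_isOpen hopen.connectedComponentIn
      ⟨x₀, mem_connectedComponentIn hx₀⟩
    have hy₀M := connectedComponentIn_subset _ _ hy₀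
    set ρ := σ * (Tuple.sort y₀)⁻¹
    have hyσ : permAct ρ y₀ ∈ weylChamber σ := by
      rw [permAct_mem_weylChamber_iff]
      simpa [ρ] using mem_weylChamber_sort hy₀inj
    refine ⟨permAct ρ y₀, ⟨hM ρ y₀ hy₀M, injective_of_mem_weylChamber hyσ⟩, ?_⟩
    change (Tuple.sort _, permOrbit _) = (σ, permOrbit _)
    rw [← eq_sort_of_mem_weylChamber hyσ, ← image_permAct_connectedComponentIn hM ρ hy₀M,
      permOrbit_image_permAct, ← connectedComponentIn_eq hy₀]

theorem ncard_components_inter_injective (hopen : IsOpen M)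
    (hM : ∀ σ, ∀ x ∈ M, permAct σ x ∈ M) (hconv : ∀ x, Convex ℝ (connectedComponentIn M x)) :
    (components (M ∩ {v | Injective v})).ncard =
      n.factorial * (orbitsOf (components M)).ncard := by
  rw [components_eq_image, ncard_image_eq_ncard_image_of_eq_iff
      (g := fun x => (Tuple.sort x, permOrbit (connectedComponentIn M x))) fun x hx y hy =>
        (connectedComponentIn_inter_injective_eq_iff hM hconv hx hy).trans Prod.mk_inj.symm,
    image_sort_permOrbit hopen hM, ncard_prod, ncard_univ, Nat.card_perm, Nat.card_fin]

end StableSet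

section Arrangements

variable {n : ℕ}

theorem compl_sUnion_braid :
    (⋃₀ {W | ∃ p q : Fin n, p ≠ q ∧ W = {x | x p = x q}})ᶜ =
      {x : Fin n → ℝ | Injective x} := by
  ext x
  simp only [mem_compl_iff, mem_sUnion, mem_ofPred_eq, not_exists, not_and]
  refine ⟨fun h p q hpq => by_contra fun hne => h _ ⟨p, q, hne, rfl⟩ hpq, ?_⟩
  rintro hx _ ⟨p, q, hne, rfl⟩ hpq
  exact hne (hx hpq)

theorem IsHyperplane.isClosed {H : Set (Fin n → ℝ)} (hH : IsHyperplane H) : IsClosed H := by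
  obtain ⟨w, -, c, rfl⟩ := hH
  exact isClosed_eq (by fun_prop) continuous_const

theorem IsHyperplane.convex_connectedComponentIn_compl {H : Set (Fin n → ℝ)}
    (hH : IsHyperplane H) (x : Fin n → ℝ) : Convex ℝ (connectedComponentIn Hᶜ x) := by
  obtain ⟨w, -, c, rfl⟩ := hH
  refine convex_connectedComponentIn_compl_level ⟨fun y z => ?_, fun a y => ?_⟩
    (by fun_prop) c x
  · simp [mul_add, Finset.sum_add_distrib]
  · simp [Finset.mul_sum, mul_left_comm]

theorem permAct_mem_compl_sUnion {B : Set (Set (Fin n → ℝ))}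
    (hstable : ∀ σ : Perm (Fin n), ∀ H ∈ B, permAct σ '' H ∈ B) (σ : Perm (Fin n))
    {x : Fin n → ℝ} (hx : x ∈ (⋃₀ B)ᶜ) : permAct σ x ∈ (⋃₀ B)ᶜ := by
  rintro ⟨H, hH, hxH⟩
  exact hx ⟨_, hstable σ⁻¹ H hH, permAct σ x, hxH, permAct_inv_permAct σ x⟩

end Arrangements

theorem orbit_counting_general (n : ℕ) (B : Set (Set (Fin n → ℝ)))
    (hBfin : B.Finite) (hhyp : ∀ H ∈ B, IsHyperplane H)
    (hstable : ∀ σ : Equiv.Perm (Fin n), ∀ H ∈ B, permAct σ '' H ∈ B) :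
    (components ((⋃₀ (B ∪ {W | ∃ p q : Fin n, p ≠ q ∧ W = {x | x p = x q}}))ᶜ)).ncard =
      n.factorial * (orbitsOf (components ((⋃₀ B)ᶜ))).ncard := by
  have hopen : IsOpen (⋃₀ B)ᶜ := by
    rw [sUnion_eq_biUnion]
    exact (hBfin.isClosed_biUnion fun H hH => (hhyp H hH).isClosed).isOpen_compl
  have hconv (x : Fin n → ℝ) : Convex ℝ (connectedComponentIn (⋃₀ B)ᶜ x) := by
    rw [compl_sUnion]
    exact convex_connectedComponentIn_sInter <| forall_mem_image.2 fun H hH =>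
      (hhyp H hH).convex_connectedComponentIn_compl x
  rw [sUnion_union, compl_union, compl_sUnion_braid]
  exact ncard_components_inter_injective hopen (permAct_mem_compl_sUnion hstable) hconv

/-- (Kamiya–Takemura–Terao) For an `S_n`-stable arrangement `B` avoiding the braid
hyperplanes, the number of chambers of `C = B ∪ {braid hyperplanes}` equals `n!` times the
number of `S_n`-orbits of chambers of `B`. -/
theorem orbit_counting (n : ℕ) (hn : 2 ≤ n) (B : Set (Set (Fin n → ℝ)))
    (hBfin : B.Finite) (hhyp : ∀ H ∈ B, IsHyperplane H)
    (hstable : ∀ σ : Equiv.Perm (Fin n), ∀ H ∈ B, permAct σ '' H ∈ B)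
    (hbraid : ∀ H ∈ B, ∀ p q : Fin n, p ≠ q → H ≠ {x | x p = x q}) :
    (components ((⋃₀ (B ∪ {W | ∃ p q : Fin n, p ≠ q ∧ W = {x | x p = x q}}))ᶜ)).ncard =
      n.factorial * (orbitsOf (components ((⋃₀ B)ᶜ))).ncard :=
  orbit_counting_general n B hBfin hhyp hstable
end

section
/- Let c : ℕ × ℕ → ℝ satisfy the recurrence c(k, j) = c(k−1, j) + k·c(k−1, j−1) for all integers 1 ≤ k ≤ j. Then for every n ≥ 0, c(n, n) = ∑_{l=0}^{n} e_l(1, 2, …, n) · c(0, n−l), where e_l(1, 2, …, n) = ∑_{1 ≤ k_1 < ⋯ < k_l ≤ n} k_1·k_2⋯k_l is the l-th elementary symmetric polynomial evaluated at (1, 2, …, n), with e_0 = 1. -/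
/-! Induct on `k`, keeping `c (k, n)` as a convolution over the antidiagonal of `n`. The
elementary symmetric functions obey the same Pascal rule as `c`,
`e_{l+1}(x, s) = e_{l+1}(s) + x · e_l(s)`, so the recurrence for `c` is matched term by term. -/

open Finset

namespace Multiset

variable {R : Type*} [CommSemiring R]

@[simp]
theorem esymm_zero_right (s : Multiset R) : s.esymm 0 = 1 := by
  simp [esymm]

@[simp]
theorem esymm_zero_left_succ (n : ℕ) : (0 : Multiset R).esymm (n + 1) = 0 := by
  simp [esymm, powersetCard_zero_right]

theorem esymm_cons_succ (x : R) (s : Multiset R) (n : ℕ) :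
    (x ::ₘ s).esymm (n + 1) = s.esymm (n + 1) + x * s.esymm n := by
  simp [esymm, powersetCard_cons, sum_map_mul_left]

end Multiset

theorem Finset.val_map_Icc_one_add_one {α : Type*} (a : ℕ → α) (k : ℕ) :
    (Icc 1 (k + 1)).val.map a = a (k + 1) ::ₘ (Icc 1 k).val.map a := by
  rw [← insert_Icc_right_eq_Icc_add_one (by omega), insert_val_of_notMem (by simp),
    Multiset.map_cons]

theorem eq_sum_antidiagonal_esymm_mul_of_recurrence {R : Type*} [CommSemiring R]
    (a : ℕ → R) (c : ℕ × ℕ → R)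
    (hrec : ∀ k j, k ≤ j → c (k + 1, j + 1) = c (k, j + 1) + a (k + 1) * c (k, j))
    {k n : ℕ} (hkn : k ≤ n) :
    c (k, n) = ∑ p ∈ antidiagonal n, ((Icc 1 k).val.map a).esymm p.1 * c (0, p.2) := by
  induction k generalizing n with
  | zero =>
    rcases n with _ | n
    · simp
    · simp [Nat.sum_antidiagonal_succ]
  | succ k ih =>
    obtain ⟨j, rfl⟩ : ∃ j, n = j + 1 := ⟨n - 1, by omega⟩
    rw [hrec k j (by omega), ih (by omega), ih (by omega), Nat.sum_antidiagonal_succ,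
      Nat.sum_antidiagonal_succ, val_map_Icc_one_add_one]
    simp only [Multiset.esymm_cons_succ, Multiset.esymm_zero_right, add_mul, sum_add_distrib,
      mul_sum, mul_assoc]
    ring

/-- A double sequence satisfying the deletion–restriction recurrence
`c(k,j) = c(k-1,j) + k·c(k-1,j-1)` for `1 ≤ k ≤ j` satisfies
`c(n,n) = ∑_{l=0}^n e_l(1,…,n)·c(0,n-l)`, where `e_l(1,…,n)` is the `l`-th elementary
symmetric polynomial evaluated at `(1,…,n)`. -/
theorem recurrence_elementary_symmetric (c : ℕ × ℕ → ℝ)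
    (hrec : ∀ k j : ℕ, 1 ≤ k → k ≤ j →
      c (k, j) = c (k - 1, j) + (k : ℝ) * c (k - 1, j - 1)) :
    ∀ n : ℕ, c (n, n) = ∑ l ∈ Finset.range (n + 1),
      (∑ t ∈ (Finset.Icc 1 n).powersetCard l, ∏ k ∈ t, (k : ℝ)) * c (0, n - l) := by
  intro n
  have hrec_succ : ∀ k j : ℕ, k ≤ j →
      c (k + 1, j + 1) = c (k, j + 1) + ((k + 1 : ℕ) : ℝ) * c (k, j) := fun k j _ => by
    simpa using hrec (k + 1) (j + 1) (by omega) (by omega)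
  rw [eq_sum_antidiagonal_esymm_mul_of_recurrence (fun k => (k : ℝ)) c hrec_succ le_rfl,
    Nat.sum_antidiagonal_eq_sum_range_succ_mk]
  simp only [esymm_map_val]
end

section
/- Let α ≥ 0 and let c : ℕ × ℕ → ℝ satisfy the recurrence c(k, j) = c(k−1, j) + k·c(k−1, j−1) for all integers 1 ≤ k ≤ j, together with 0 ≤ c(0, j) ≤ α^j for all 0 ≤ j ≤ n. Then c(n, n) ≤ ∏_{k=1}^{n} (α + k). -/
/-!
The function `b(k, j) = α ^ (j - k) * ∏_{i=1}^k (α + i)` satisfies the recurrence with equality,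
and the right-hand side of the recurrence is monotone in the previous row because the
coefficient `k` is nonnegative; so `c ≤ b` propagates from row `0` to row `n`, where
`b(n, n) = ∏_{k=1}^n (α + k)`.
-/

open Finset

section

variable {R : Type*} [CommRing R] [LinearOrder R] [IsStrictOrderedRing R]

theorem le_pow_mul_prod_of_le_recurrence {c : ℕ × ℕ → R} {α : R} {n : ℕ}
    (hrec : ∀ k j : ℕ, k ≤ j → c (k + 1, j + 1) ≤ c (k, j + 1) + (k + 1 : R) * c (k, j))
    (hinit : ∀ j ≤ n, c (0, j) ≤ α ^ j) (k m : ℕ) (hkm : k + m ≤ n) :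
    c (k, k + m) ≤ α ^ m * ∏ i ∈ Icc 1 k, (α + i) := by
  induction k generalizing m with
  | zero => simpa using hinit m (by omega)
  | succ k ih =>
    have hstep := hrec k (k + m) (by omega)
    have hsame := ih (m + 1) (by omega)
    have hprev := ih m (by omega)
    rw [← add_assoc] at hsame
    calc c (k + 1, k + 1 + m)
        ≤ c (k, k + m + 1) + (k + 1 : R) * c (k, k + m) := by
          rwa [add_right_comm]
      _ ≤ α ^ (m + 1) * ∏ i ∈ Icc 1 k, (α + i)
            + (k + 1 : R) * (α ^ m * ∏ i ∈ Icc 1 k, (α + i)) := by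
          gcongr
      _ = α ^ m * ∏ i ∈ Icc 1 (k + 1), (α + i) := by
          rw [prod_Icc_succ_top (by omega)]
          push_cast
          ring

end

theorem recurrence_upper_bound_general (n : ℕ) (α : ℝ) (c : ℕ × ℕ → ℝ)
    (hrec : ∀ k j : ℕ, 1 ≤ k → k ≤ j →
      c (k, j) = c (k - 1, j) + (k : ℝ) * c (k - 1, j - 1))
    (hinit : ∀ j : ℕ, j ≤ n → 0 ≤ c (0, j) ∧ c (0, j) ≤ α ^ j) :
    c (n, n) ≤ ∏ k ∈ Finset.Icc 1 n, (α + (k : ℝ)) := by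
  have hrec' : ∀ k j : ℕ, k ≤ j → c (k + 1, j + 1) ≤ c (k, j + 1) + (k + 1 : ℝ) * c (k, j) := by
    intro k j hkj
    have h := hrec (k + 1) (j + 1) (by omega) (by omega)
    push_cast at h
    exact h.le
  simpa using le_pow_mul_prod_of_le_recurrence hrec' (fun j hj => (hinit j hj).2) n 0 (by omega)

/-- A double sequence satisfying the deletion–restriction recurrence
`c(k,j) = c(k-1,j) + k·c(k-1,j-1)` for `1 ≤ k ≤ j`, with `0 ≤ c(0,j) ≤ α^j` for
`0 ≤ j ≤ n` and `α ≥ 0`, satisfies `c(n,n) ≤ ∏_{k=1}^n (α + k)`. -/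
theorem recurrence_upper_bound (n : ℕ) (α : ℝ) (hα : 0 ≤ α) (c : ℕ × ℕ → ℝ)
    (hrec : ∀ k j : ℕ, 1 ≤ k → k ≤ j →
      c (k, j) = c (k - 1, j) + (k : ℝ) * c (k - 1, j - 1))
    (hinit : ∀ j : ℕ, j ≤ n → 0 ≤ c (0, j) ∧ c (0, j) ≤ α ^ j) :
    c (n, n) ≤ ∏ k ∈ Finset.Icc 1 n, (α + (k : ℝ)) :=
  recurrence_upper_bound_general n α c hrec hinit
end

section
/- For all integers k ≥ 1 and n with n > 2k, the trinomial coefficient satisfies n!/(k!·k!·(n−2k)!) ≥ 2^{2k}·2^{n·H((n−2k)/n)} / (8·k·√((n−2k)/n)), where H is the binary entropy function. -/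
/-!
Write `j! = s_j · √(2j) · (j/e)^j`, where `s_j` is the Stirling sequence, and `m = n - 2k`.
The powers of `e` cancel in `n!/(k!² m!)`, which becomes
`s_n/(s_k² s_m) · n^n/(m^m k^{2k}) · √(n/m)/(2k)`, while `2^{2k} · 2^{n H(m/n)} = n^n/(m^m k^{2k})`.
So it suffices that `s_k² s_m ≤ 4 s_n`. The sequence `s_j` decreases to `√π`, so `s_n ≥ √π`,
`s_k, s_m ≤ s_1 = e/√2`, and unless `k = m = 1` one of them is at most `s_2 = e²/4`;
then `s_k² s_m ≤ s_1² s_2 < 4√π`. (`s_1³` alone just exceeds `4√π`, and `n = 3` is checked by hand.)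
-/

open Real hiding binEntropy
open Nat Stirling

theorem two_rpow_mul_binEntropy {a b : ℝ} (ha : 0 < a) (hb : 0 < b) :
    (2 : ℝ) ^ ((a + b) * binEntropy (a / (a + b))) = (a + b) ^ (a + b) / (a ^ a * b ^ b) := by
  have hab : 0 < a + b := by positivity
  have hcompl : 1 - a / (a + b) = b / (a + b) := by field_simp; ring
  simp only [rpow_def_of_pos two_pos, rpow_def_of_pos hab, rpow_def_of_pos ha,
    rpow_def_of_pos hb, ← exp_add, ← exp_sub, binEntropy, hcompl, logb,
    log_div ha.ne' hab.ne', log_div hb.ne' hab.ne']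
  congr 1
  field_simp
  ring

namespace Stirling

theorem factorial_eq_stirlingSeq_mul {n : ℕ} (hn : n ≠ 0) :
    (n ! : ℝ) = stirlingSeq n * (√(2 * n) * (n / exp 1) ^ n) := by
  rw [stirlingSeq, div_mul_cancel₀]
  positivity

theorem stirlingSeq_pos {n : ℕ} (hn : n ≠ 0) : 0 < stirlingSeq n :=
  (sqrt_pos.mpr pi_pos).trans_le (sqrt_pi_le_stirlingSeq hn)

theorem stirlingSeq_le_of_le {j n : ℕ} (hj : j ≠ 0) (h : j ≤ n) :
    stirlingSeq n ≤ stirlingSeq j := by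
  obtain ⟨i, rfl⟩ := Nat.exists_eq_succ_of_ne_zero hj
  obtain ⟨l, rfl⟩ := Nat.exists_eq_succ_of_ne_zero (Nat.pos_of_ne_zero hj |>.trans_le h).ne'
  exact stirlingSeq'_antitone (Nat.succ_le_succ_iff.mp h)

theorem stirlingSeq_two : stirlingSeq 2 = exp 1 ^ 2 / 4 := by
  have h4 : √(2 * ((2 : ℕ) : ℝ)) = 2 := by
    rw [show (2 * ((2 : ℕ) : ℝ)) = 2 ^ 2 by norm_num, sqrt_sq (by norm_num)]
  rw [stirlingSeq, h4]
  norm_num [Nat.factorial, div_pow, ← exp_nat_mul]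
  field_simp

theorem stirlingSeq_one_lt : stirlingSeq 1 < 1.923 := by
  have hsqrt2 : (1.414 : ℝ) ≤ √2 := (le_sqrt' (by norm_num)).mpr (by norm_num)
  rw [stirlingSeq_one, div_lt_iff₀ (by positivity)]
  nlinarith [exp_one_lt_d9]

theorem stirlingSeq_two_lt : stirlingSeq 2 < 1.848 := by
  rw [stirlingSeq_two]
  nlinarith [exp_one_lt_d9, exp_pos 1]

theorem stirlingSeq_sq_mul_le {k m : ℕ} (hk : k ≠ 0) (hm : m ≠ 0) (h : 2 ≤ k ∨ 2 ≤ m) :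
    stirlingSeq k ^ 2 * stirlingSeq m ≤ 4 * √π := by
  have hk1 := stirlingSeq_le_of_le one_ne_zero (Nat.one_le_iff_ne_zero.mpr hk)
  have hm1 := stirlingSeq_le_of_le one_ne_zero (Nat.one_le_iff_ne_zero.mpr hm)
  have := stirlingSeq_pos hk
  have := stirlingSeq_pos hm
  have := stirlingSeq_one_lt
  have := stirlingSeq_two_lt
  have hpi : 1.772 < √π := (lt_sqrt (by norm_num)).mpr (by linarith [pi_gt_d6])
  rcases h with hk2 | hm2
  · have hk2 := stirlingSeq_le_of_le two_ne_zero hk2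
    calc stirlingSeq k ^ 2 * stirlingSeq m ≤ 1.848 ^ 2 * 1.923 := by gcongr <;> linarith
      _ ≤ 4 * √π := by linarith
  · have hm2 := stirlingSeq_le_of_le two_ne_zero hm2
    calc stirlingSeq k ^ 2 * stirlingSeq m ≤ 1.923 ^ 2 * 1.848 := by gcongr <;> linarith
      _ ≤ 4 * √π := by linarith

theorem trinomial_eq_stirlingSeq_mul {k m : ℕ} (hk : k ≠ 0) (hm : m ≠ 0) :
    ((2 * k + m)! : ℝ) / (k ! * k ! * m !) =
      stirlingSeq (2 * k + m) / (stirlingSeq k ^ 2 * stirlingSeq m) *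
        (((2 * k + m : ℕ) : ℝ) ^ (2 * k + m) / ((m : ℝ) ^ m * (k : ℝ) ^ (2 * k)) *
          √((2 * k + m : ℕ) / m) / (2 * k)) := by
  have hsqrt : √(2 * ((2 * k + m : ℕ) : ℝ)) = √((2 * k + m : ℕ) / m) * √(2 * m) := by
    rw [← sqrt_mul (by positivity)]
    congr 1
    field_simp
  have hsk : √(2 * (k : ℝ)) ^ 2 = 2 * k := sq_sqrt (by positivity)
  have := stirlingSeq_pos hk
  have := stirlingSeq_pos hm
  rw [factorial_eq_stirlingSeq_mul hk, factorial_eq_stirlingSeq_mul hm,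
    factorial_eq_stirlingSeq_mul (by omega), hsqrt]
  field_simp
  rw [hsk]
  simp only [div_pow, pow_add, pow_mul]
  field_simp
  ring

end Stirling

theorem pow_div_mul_sqrt_le_trinomial {k m : ℕ} (hk : k ≠ 0) (hm : m ≠ 0) :
    ((2 * k + m : ℕ) : ℝ) ^ (2 * k + m) / ((m : ℝ) ^ m * (k : ℝ) ^ (2 * k)) *
        √((2 * k + m : ℕ) / m) / (8 * k) ≤
      ((2 * k + m)! : ℝ) / (k ! * k ! * m !) := by
  by_cases h : 2 ≤ k ∨ 2 ≤ m
  · rw [trinomial_eq_stirlingSeq_mul hk hm]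
    have := stirlingSeq_pos hk
    have := stirlingSeq_pos hm
    have hratio : 1 / 4 ≤ stirlingSeq (2 * k + m) / (stirlingSeq k ^ 2 * stirlingSeq m) := by
      rw [div_le_div_iff₀ (by norm_num) (by positivity)]
      linarith [sqrt_pi_le_stirlingSeq (n := 2 * k + m) (by omega), stirlingSeq_sq_mul_le hk hm h]
    calc _ = 1 / 4 * (((2 * k + m : ℕ) : ℝ) ^ (2 * k + m) / ((m : ℝ) ^ m * (k : ℝ) ^ (2 * k)) *
            √((2 * k + m : ℕ) / m) / (2 * k)) := by ring
      _ ≤ _ := by gcongr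
  · obtain ⟨rfl, rfl⟩ : k = 1 ∧ m = 1 := by omega
    have : √3 < 1.74 := (sqrt_lt' (by norm_num)).mpr (by norm_num)
    norm_num [Nat.factorial]
    linarith

/-- For `k ≥ 1` and `n > 2k`, the trinomial coefficient satisfies
`n!/(k!·k!·(n-2k)!) ≥ 2^{2k}·2^{n·H((n-2k)/n)}/(8k·√((n-2k)/n))`. -/
theorem trinomial_lower_bound (n k : ℕ) (hk : 1 ≤ k) (hn : 2 * k < n) :
    (n.factorial : ℝ) / ((k.factorial : ℝ) * k.factorial * (n - 2 * k).factorial) ≥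
      (2 : ℝ) ^ (2 * k) *
        (2 : ℝ) ^ ((n : ℝ) * binEntropy (((n : ℝ) - 2 * k) / n)) /
          (8 * k * Real.sqrt (((n : ℝ) - 2 * k) / n)) := by
  obtain ⟨m, rfl⟩ : ∃ m, n = 2 * k + m := ⟨n - 2 * k, by omega⟩
  have hk0 : k ≠ 0 := by omega
  have hm0 : m ≠ 0 := by omega
  have hentropy := two_rpow_mul_binEntropy (a := m) (b := ((2 * k : ℕ) : ℝ))
    (by positivity) (by positivity)
  have hcast : (m : ℝ) + ((2 * k : ℕ) : ℝ) = ((2 * k + m : ℕ) : ℝ) := by push_cast; ring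
  have hsub : ((2 * k + m : ℕ) : ℝ) - 2 * k = m := by push_cast; ring
  simp only [hcast, rpow_natCast] at hentropy
  rw [Nat.add_sub_cancel_left, hsub, hentropy, ge_iff_le]
  convert pow_div_mul_sqrt_le_trinomial hk0 hm0 using 1
  rw [← inv_div ((2 * k + m : ℕ) : ℝ) m, sqrt_inv]
  field_simp
  push_cast
  ring
end

section
/- For every positive integer t, setting n = 4t, the following inequality holds: (1/2^{t}) · n!/((t!)·(t!)·(2t)!) ≥ 2^{5t} / (n·√2). -/
lemma sixteen_pow_le (n : ℕ) (hn : 1 ≤ n) : 16 ^ n ≤ 4 * n * Nat.centralBinom n ^ 2 := by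
  induction n with
  | zero => omega
  | succ n ih =>
    rcases Nat.eq_zero_or_pos n with h0 | h0
    · subst h0; simp [Nat.centralBinom]
    · have ih' := ih h0
      have key := Nat.succ_mul_centralBinom_succ n
      apply Nat.le_of_mul_le_mul_left _ (Nat.succ_pos n)
      have key2 : ((n + 1) * Nat.centralBinom (n + 1)) ^ 2
          = (2 * (2 * n + 1) * Nat.centralBinom n) ^ 2 := by rw [key]
      rw [pow_succ]
      nlinarith [key2, ih', Nat.centralBinom_pos n, sq_nonneg (Nat.centralBinom n)]

lemma cb_real (n : ℕ) (hn : 1 ≤ n) :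
    (4 : ℝ) ^ n ≤ 2 * Real.sqrt n * (Nat.centralBinom n : ℝ) := by
  have h : (16 : ℝ) ^ n ≤ 4 * n * (Nat.centralBinom n : ℝ) ^ 2 := by
    exact_mod_cast sixteen_pow_le n hn
  have h1 : Real.sqrt ((16 : ℝ) ^ n) ≤ Real.sqrt (4 * n * (Nat.centralBinom n : ℝ) ^ 2) :=
    Real.sqrt_le_sqrt h
  have e1 : (16 : ℝ) ^ n = ((4 : ℝ) ^ n) ^ 2 := by
    rw [← pow_mul, mul_comm, pow_mul]; norm_num
  have e2 : (2 * Real.sqrt n * (Nat.centralBinom n : ℝ)) ^ 2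
      = 4 * n * (Nat.centralBinom n : ℝ) ^ 2 := by
    rw [mul_pow, mul_pow, Real.sq_sqrt (by positivity)]; ring
  rw [e1, Real.sqrt_sq (by positivity), ← e2, Real.sqrt_sq (by positivity)] at h1
  exact h1

/-- For every positive integer `t`, with `n = 4t`,
`(1/2^t)·n!/(t!·t!·(2t)!) ≥ 2^{5t}/(n·√2)`. -/
theorem leading_coefficient_lower_bound (t : ℕ) (ht : 1 ≤ t) :
    (1 / (2 : ℝ) ^ t) *
        (((4 * t).factorial : ℝ) /
          ((t.factorial : ℝ) * t.factorial * (2 * t).factorial)) ≥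
      (2 : ℝ) ^ (5 * t) / ((4 * t : ℝ) * Real.sqrt 2) := by
  set C1 := Nat.centralBinom t with hC1
  set C2 := Nat.centralBinom (2 * t) with hC2
  have n1 : C1 * (t.factorial * t.factorial) = (2 * t).factorial := by
    have := Nat.choose_mul_factorial_mul_factorial (show t ≤ 2 * t by omega)
    have h2 : 2 * t - t = t := by omega
    rw [h2] at this
    simpa [hC1, Nat.centralBinom, mul_assoc] using this
  have n2 : C2 * ((2 * t).factorial * (2 * t).factorial) = (4 * t).factorial := by
    have := Nat.choose_mul_factorial_mul_factorial (show 2 * t ≤ 4 * t by omega)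
    have h2 : 4 * t - 2 * t = 2 * t := by omega
    rw [h2] at this
    simpa [hC2, Nat.centralBinom, mul_assoc, show 2 * (2 * t) = 4 * t by ring] using this
  have nM : C2 * C1 * (t.factorial * t.factorial * (2 * t).factorial) = (4 * t).factorial := by
    calc C2 * C1 * (t.factorial * t.factorial * (2 * t).factorial)
        = C2 * ((C1 * (t.factorial * t.factorial)) * (2 * t).factorial) := by ring
      _ = C2 * ((2 * t).factorial * (2 * t).factorial) := by rw [n1]
      _ = (4 * t).factorial := n2
  have hfacpos : (0 : ℝ) < (t.factorial : ℝ) * t.factorial * (2 * t).factorial := by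
    positivity
  have hM : (((4 * t).factorial : ℝ) /
      ((t.factorial : ℝ) * t.factorial * (2 * t).factorial)) = (C2 : ℝ) * C1 := by
    rw [div_eq_iff (ne_of_gt hfacpos)]
    exact_mod_cast (nM).symm
  rw [hM, ge_iff_le, one_div, inv_mul_eq_div,
    div_le_div_iff₀ (by positivity) (by positivity)]
  -- goal : 2^(5t) * 2^t ≤ C2 * C1 * (4t * √2)
  have ht2 : 1 ≤ 2 * t := by omega
  have b1 : (4 : ℝ) ^ (2 * t) ≤ 2 * Real.sqrt (2 * t) * (C2 : ℝ) := by
    have := cb_real (2 * t) ht2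
    simpa [hC2] using this
  have b2 : (4 : ℝ) ^ t ≤ 2 * Real.sqrt t * (C1 : ℝ) := cb_real t ht
  have prod := mul_le_mul b1 b2 (by positivity) (by positivity)
  have hs : Real.sqrt (2 * (t : ℝ)) = Real.sqrt 2 * Real.sqrt t :=
    Real.sqrt_mul (by norm_num) _
  have h2 : Real.sqrt t * Real.sqrt t = (t : ℝ) := Real.mul_self_sqrt (by positivity)
  calc (2 : ℝ) ^ (5 * t) * 2 ^ t = (4 : ℝ) ^ (2 * t) * 4 ^ t := by
        rw [← pow_add, show (4 : ℝ) = 2 ^ 2 by norm_num, ← pow_mul, ← pow_mul, ← pow_add]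
        congr 1; ring
    _ ≤ (2 * Real.sqrt (2 * t) * (C2 : ℝ)) * (2 * Real.sqrt t * (C1 : ℝ)) := prod
    _ = (C2 : ℝ) * C1 * ((4 * t) * Real.sqrt 2) := by
        push_cast
        rw [hs]
        linear_combination (4 * Real.sqrt 2 * (C2 : ℝ) * (C1 : ℝ)) * h2
end
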